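/- arXiv:1404.5609 — 9 statements merged into one kernel-verified Lean document; each statement's English description precedes it below -/
import Mathlib

section
/- Pairwise exchangeability for the features: for any subset S ⊆ {1,…,p}, the Gram matrix of the augmented design is invariant under swapping, i.e. ([X X̃]_swap(S))ᵀ [X X̃]_swap(S) = [X X̃]ᵀ [X X̃]. -/
open Matrix

/-- The augmented design `[X X̃]`: the `n × 2p` columnwise concatenation of `X` and `X̃`. -/
def knockoffAug {n p : ℕ} (X Xt : Matrix (Fin n) (Fin p) ℝ) :
    Matrix (Fin n) (Fin p ⊕ Fin p) ℝ :=
  Matrix.fromCols X Xt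

/-- `[X X̃]_swap(S)`: the augmented design with columns `X_j` and `X̃_j` exchanged
for each `j ∈ S`. -/
def knockoffSwap {n p : ℕ} (X Xt : Matrix (Fin n) (Fin p) ℝ) (S : Finset (Fin p)) :
    Matrix (Fin n) (Fin p ⊕ Fin p) ℝ :=
  Matrix.fromCols
    (Matrix.of fun i j => if j ∈ S then Xt i j else X i j)
    (Matrix.of fun i j => if j ∈ S then X i j else Xt i j)


def knockoffSwapIndex {ι : Type*} [DecidableEq ι] (S : Finset ι) : ι ⊕ ι → ι ⊕ ι :=
  Sum.elim (fun j => if j ∈ S then .inr j else .inl j)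
    (fun j => if j ∈ S then .inl j else .inr j)

theorem knockoffSwap_eq_submatrix {n p : ℕ} (X Xt : Matrix (Fin n) (Fin p) ℝ)
    (S : Finset (Fin p)) :
    knockoffSwap X Xt S = (knockoffAug X Xt).submatrix id (knockoffSwapIndex S) := by
  ext i (j | j) <;> by_cases hj : j ∈ S <;>
    simp [knockoffSwap, knockoffAug, knockoffSwapIndex, hj]

theorem Matrix.transpose_mul_self_submatrix_id {m n o R : Type*} [Fintype m]
    [NonUnitalNonAssocSemiring R] (A : Matrix m n R) (f : o → n) :
    (A.submatrix id f)ᵀ * A.submatrix id f = (Aᵀ * A).submatrix f f := by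
  rw [transpose_submatrix, submatrix_mul _ _ _ _ _ Function.bijective_id]

theorem Matrix.transpose_fromCols_mul_fromCols {m n₁ n₂ R : Type*} [Fintype m]
    [Semiring R] (A₁ : Matrix m n₁ R) (A₂ : Matrix m n₂ R) :
    (fromCols A₁ A₂)ᵀ * fromCols A₁ A₂
      = fromBlocks (A₁ᵀ * A₁) (A₁ᵀ * A₂) (A₂ᵀ * A₁) (A₂ᵀ * A₂) := by
  rw [transpose_fromCols, fromRows_mul_fromCols]

/- Entries with both or neither index in `S` move between blocks holding the same matrix;
the others have `i ≠ j`, where `A` and `B` agree. -/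
theorem fromBlocks_submatrix_knockoffSwapIndex {ι α : Type*} [DecidableEq ι]
    (A B : Matrix ι ι α) (hAB : ∀ i j, i ≠ j → B i j = A i j) (S : Finset ι) :
    (fromBlocks A B B A).submatrix (knockoffSwapIndex S) (knockoffSwapIndex S)
      = fromBlocks A B B A := by
  ext (i | i) (j | j) <;> by_cases hi : i ∈ S <;> by_cases hj : j ∈ S <;>
    simp only [knockoffSwapIndex, hi, hj, submatrix_apply, Sum.elim_inl, Sum.elim_inr,
      if_true, if_false, fromBlocks_apply₁₁, fromBlocks_apply₁₂, fromBlocks_apply₂₁,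
      fromBlocks_apply₂₂] <;> grind

/-- **Pairwise exchangeability for the features** (Lemma 2): if `X̃` is a knockoff
matrix for `X`, i.e. `X̃ᵀX̃ = XᵀX = Σ` and `XᵀX̃ = Σ − diag{s}`, then for any subset
`S ⊆ {1,…,p}` the Gram matrix of the augmented design is invariant under swapping:
`([X X̃]_swap(S))ᵀ [X X̃]_swap(S) = [X X̃]ᵀ [X X̃]`. -/
theorem knockoff_swap_gram_invariant {n p : ℕ}
    (X Xt : Matrix (Fin n) (Fin p) ℝ) (s : Fin p → ℝ)
    (h1 : Xtᵀ * Xt = Xᵀ * X)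
    (h2 : Xᵀ * Xt = Xᵀ * X - Matrix.diagonal s)
    (S : Finset (Fin p)) :
    (knockoffSwap X Xt S)ᵀ * knockoffSwap X Xt S
      = (knockoffAug X Xt)ᵀ * knockoffAug X Xt := by
  have h3 : Xtᵀ * X = Xᵀ * X - Matrix.diagonal s := by
    rw [← transpose_transpose (Xtᵀ * X), transpose_mul, transpose_transpose, h2,
      transpose_sub, transpose_mul, transpose_transpose, diagonal_transpose]
  have hoff : ∀ i j, i ≠ j → (Xᵀ * X - diagonal s) i j = (Xᵀ * X) i j := fun i j hij => by
    rw [Matrix.sub_apply, diagonal_apply_ne _ hij, sub_zero]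
  rw [knockoffSwap_eq_submatrix, transpose_mul_self_submatrix_id, knockoffAug,
    transpose_fromCols_mul_fromCols, h1, h2, h3,
    fromBlocks_submatrix_knockoffSwapIndex _ _ hoff]
end

section
/- Modified FDR control for FSTP0: under the stated assumptions on the p-values, fix c ∈ (0,1), q ∈ (0,1] and K ⊆ {1,…,m}, and let k̂₀ = max{ k ∈ K : #{j ≤ k : p_j > c} / max(k, 1) ≤ (1−c)·q } (with k̂₀ = 0 if this set is empty). Rejecting H_j for all j ≤ k̂₀, let V = #{null j ≤ k̂₀} and R = k̂₀. Then E[ V / (R + q⁻¹/(1−c)) ] ≤ q. -/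
/-!
Only the pattern of which `p_j` are `≤ c` matters, and conditionally on the non-null p-values
the null indicators `1{p_j ≤ c}` are i.i.d. Bernoulli(`r`) with `r ≤ c`. At the stopping index
`R ≥ 1` at most `(1 - c) q R` of the nulls `j ≤ R` have `p_j > c`, which gives
`V / (R + q⁻¹/(1 - c)) ≤ (1 - c) q (1 + M_R)` for
`M_k = #{null j ≤ k, p_j ≤ c} / (1 + #{null j ≤ k, p_j > c})`.
Run backwards in `k`, `M_k` is a supermartingale for the filtration that remembers, below `k`,
only how many nulls have `p_j ≤ c`, and `R` is a stopping time for it. Optional stopping gives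
`E[M_R] ≤ E[M_m] ≤ r/(1 - r) ≤ c/(1 - c)`, and `(1 - c) q (1 + c/(1 - c)) = q`.
-/

open MeasureTheory ProbabilityTheory

/-- `#{j ≤ k : p_j > c}`, where the p-values are indexed by `j ∈ {1,…,m}`. -/
noncomputable def seqCountAbove (pv : ℕ → ℝ) (c : ℝ) (k : ℕ) : ℕ :=
  ((Finset.Icc 1 k).filter fun j => c < pv j).card

/-- `#{j ≤ k : p_j ≤ c}`. -/
noncomputable def seqCountBelow (pv : ℕ → ℝ) (c : ℝ) (k : ℕ) : ℕ :=
  ((Finset.Icc 1 k).filter fun j => pv j ≤ c).card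

/-- The FSTP0 stopping index
`k̂₀ = max{ k ∈ K : #{j ≤ k : p_j > c} / max(k, 1) ≤ (1−c)·q }`, set to `0` if
this set is empty. -/
noncomputable def fstp0Stop (c q : ℝ) (K : Finset ℕ) (pv : ℕ → ℝ) : ℕ :=
  let cand := K.filter fun k => ((seqCountAbove pv c k : ℝ)) / max (k : ℝ) 1 ≤ (1 - c) * q
  if h : cand.Nonempty then cand.max' h else 0

open Finset

namespace FSTP0

section Bernoulli

variable {α : Type*}

theorem sum_powerset_union [DecidableEq α] {A B : Finset α} (h : Disjoint A B) (f : Finset α → ℝ) :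
    ∑ U ∈ (A ∪ B).powerset, f U = ∑ U ∈ A.powerset, ∑ V ∈ B.powerset, f (U ∪ V) := by
  rw [← sum_product']
  refine sum_nbij' (fun U => (U ∩ A, U ∩ B)) (fun P => P.1 ∪ P.2) ?_ ?_ ?_ ?_ ?_
  · intro U _
    simp
  · intro P hP
    simp only [mem_product, mem_powerset] at hP ⊢
    exact union_subset_union hP.1 hP.2
  · intro U hU
    rw [mem_powerset] at hU
    rw [← inter_union_distrib_left, inter_eq_left.2 hU]
  · intro P hP
    simp only [mem_product, mem_powerset] at hP
    have hA : P.2 ∩ A = ∅ := disjoint_iff_inter_eq_empty.1 (h.symm.mono_left hP.2)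
    have hB : P.1 ∩ B = ∅ := disjoint_iff_inter_eq_empty.1 (h.mono_left hP.1)
    simp [union_inter_distrib_right, inter_eq_left.2 hP.1, inter_eq_left.2 hP.2, hA, hB]
  · intro U hU
    rw [mem_powerset] at hU
    rw [← inter_union_distrib_left, inter_eq_left.2 hU]

def bernoulliWeight (r : ℝ) (N U : Finset α) : ℝ :=
  r ^ U.card * (1 - r) ^ (N.card - U.card)

variable {r : ℝ}

theorem bernoulliWeight_nonneg (hr0 : 0 ≤ r) (hr1 : r ≤ 1) (N U : Finset α) :
    0 ≤ bernoulliWeight r N U :=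
  mul_nonneg (pow_nonneg hr0 _) (pow_nonneg (sub_nonneg.2 hr1) _)

theorem sum_bernoulliWeight (N : Finset α) : ∑ U ∈ N.powerset, bernoulliWeight r N U = 1 := by
  simp [bernoulliWeight, sum_pow_mul_eq_add_pow]

theorem bernoulliWeight_union [DecidableEq α] {A B U V : Finset α} (h : Disjoint A B) (hU : U ⊆ A)
    (hV : V ⊆ B) :
    bernoulliWeight r (A ∪ B) (U ∪ V) = bernoulliWeight r A U * bernoulliWeight r B V := by
  have hUA := card_le_card hU
  have hVB := card_le_card hV
  rw [bernoulliWeight, bernoulliWeight, bernoulliWeight, card_union_of_disjoint h,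
    card_union_of_disjoint (h.mono hU hV),
    show A.card + B.card - (U.card + V.card) = (A.card - U.card) + (B.card - V.card) by omega,
    pow_add, pow_add]
  ring

theorem prod_ite_mem_eq_bernoulliWeight [DecidableEq α] {N U : Finset α} (hU : U ⊆ N) :
    ∏ j ∈ N, (if j ∈ U then r else 1 - r) = bernoulliWeight r N U := by
  have hUN : N.filter (· ∈ U) = U := by rw [filter_mem_eq_inter, inter_eq_right.2 hU]
  rw [prod_ite, prod_const, prod_const, hUN, bernoulliWeight, filter_not, hUN,
    card_sdiff_of_subset hU]

theorem sum_bernoulliWeight_mul_eq [DecidableEq α] {N J : Finset α} (hJ : J ⊆ N)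
    (g : Finset α → ℝ) :
    ∑ U ∈ N.powerset, bernoulliWeight r N U * g U =
      ∑ T ∈ (N \ J).powerset, ∑ s ∈ range (J.card + 1),
        bernoulliWeight r (N \ J) T * (r ^ s * (1 - r) ^ (J.card - s)) *
          ∑ V ∈ J.powersetCard s, g (V ∪ T) := by
  have hd : Disjoint J (N \ J) := disjoint_sdiff
  conv_lhs => rw [← union_sdiff_of_subset hJ, sum_powerset_union hd]
  rw [sum_comm]
  refine sum_congr rfl fun T hT => ?_
  rw [sum_powerset]
  refine sum_congr rfl fun s _ => ?_
  rw [mul_sum]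
  refine sum_congr rfl fun V hV => ?_
  obtain ⟨hVJ, hVs⟩ := mem_powersetCard.1 hV
  rw [bernoulliWeight_union hd hVJ (mem_powerset.1 hT), bernoulliWeight, hVs]
  ring

theorem sum_powersetCard_succ_insert [DecidableEq α] {J : Finset α} {a : α} (ha : a ∉ J) (s : ℕ)
    (f : Finset α → ℝ) :
    ∑ V ∈ (insert a J).powersetCard (s + 1), f V =
      ∑ V ∈ J.powersetCard (s + 1), f V + ∑ V ∈ J.powersetCard s, f (insert a V) := by
  have hnot : ∀ {k}, ∀ V ∈ J.powersetCard k, a ∉ V := fun V hV h =>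
    ha ((mem_powersetCard.1 hV).1 h)
  have hdisj : Disjoint (J.powersetCard (s + 1)) ((J.powersetCard s).image (insert a)) := by
    refine disjoint_left.2 fun V hV hV' => hnot V hV ?_
    obtain ⟨W, -, rfl⟩ := mem_image.1 hV'
    exact mem_insert_self a W
  have hinj : Set.InjOn (insert a) (J.powersetCard s : Set (Finset α)) := fun V hV W hW h => by
    rw [← erase_insert (hnot V hV), ← erase_insert (hnot W hW)]
    exact congrArg (·.erase a) h
  rw [powersetCard_succ_insert ha, sum_union hdisj, sum_image hinj]

/-- One step of the reverse martingale, averaged over the subsets of size `s + 1`; an equality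
except when `s = n`. -/
theorem choose_mul_div_add_le (n s : ℕ) :
    (n.choose (s + 1) : ℝ) * ((s + 1 : ℕ) / (1 + (n - (s + 1) : ℕ))) +
        n.choose s * (s / (1 + (n - s : ℕ))) ≤
      n.choose (s + 1) * ((s + 1 : ℕ) / (1 + (n - (s + 1) + 1 : ℕ))) +
        n.choose s * ((s + 1 : ℕ) / (1 + (n - s : ℕ))) := by
  rcases lt_or_ge s n with hs | hs
  · obtain ⟨d, rfl⟩ : ∃ d, n = s + 1 + d := ⟨n - (s + 1), by omega⟩
    have hchoose : ((s + 1 + d).choose (s + 1) : ℝ) * (s + 1) = (s + 1 + d).choose s * (d + 1) := by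
      exact_mod_cast (Nat.choose_succ_right_eq _ s).trans (by congr 1; omega)
    rw [show s + 1 + d - (s + 1) = d by omega, show s + 1 + d - s = d + 1 by omega]
    push_cast
    apply le_of_eq
    field_simp
    linear_combination hchoose
  · rw [Nat.choose_eq_zero_of_lt (by omega : n < s + 1), Nat.cast_zero, zero_mul, zero_mul,
      zero_add, zero_add]
    gcongr
    linarith

theorem sum_powersetCard_erase_div_le [DecidableEq α] {J : Finset α} {a : α} (ha : a ∈ J)
    (s : ℕ) :
    ∑ V ∈ J.powersetCard s, ((V.erase a).card : ℝ) / (1 + ((J \ V).erase a).card) ≤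
      ∑ V ∈ J.powersetCard s, (V.card : ℝ) / (1 + (J \ V).card) := by
  obtain ⟨J, haJ, rfl⟩ : ∃ J', a ∉ J' ∧ insert a J' = J :=
    ⟨J.erase a, notMem_erase a J, insert_erase ha⟩
  cases s with
  | zero => simp
  | succ s =>
  rw [sum_powersetCard_succ_insert haJ, sum_powersetCard_succ_insert haJ]
  have hnot : ∀ {k}, ∀ V ∈ J.powersetCard k, a ∉ V := fun V hV h =>
    haJ ((mem_powersetCard.1 hV).1 h)
  have haJV : ∀ V : Finset α, a ∉ J \ V := fun _ => notMem_mono sdiff_subset haJ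
  have hcard : ∀ {V k}, V ∈ J.powersetCard k → (J \ V).card = J.card - k := fun hV => by
    rw [card_sdiff_of_subset (mem_powersetCard.1 hV).1, (mem_powersetCard.1 hV).2]
  have e₁ : ∀ V ∈ J.powersetCard (s + 1), ((V.erase a).card : ℝ) /
      (1 + ((insert a J \ V).erase a).card) = (s + 1 : ℕ) / (1 + (J.card - (s + 1) : ℕ)) :=
    fun V hV => by rw [insert_sdiff_of_notMem _ (hnot V hV), erase_insert (haJV V),
      erase_eq_of_notMem (hnot V hV), hcard hV, (mem_powersetCard.1 hV).2]
  have e₂ : ∀ V ∈ J.powersetCard (s + 1), (V.card : ℝ) / (1 + (insert a J \ V).card) =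
      (s + 1 : ℕ) / (1 + (J.card - (s + 1) + 1 : ℕ)) :=
    fun V hV => by rw [insert_sdiff_of_notMem _ (hnot V hV), card_insert_of_notMem (haJV V),
      hcard hV, (mem_powersetCard.1 hV).2]
  have e₃ : ∀ V ∈ J.powersetCard s, (((insert a V).erase a).card : ℝ) /
      (1 + ((insert a J \ insert a V).erase a).card) = s / (1 + (J.card - s : ℕ)) :=
    fun V hV => by rw [insert_sdiff_insert, sdiff_insert_of_notMem haJ, erase_insert (hnot V hV),
      erase_eq_of_notMem (haJV V), hcard hV, (mem_powersetCard.1 hV).2]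
  have e₄ : ∀ V ∈ J.powersetCard s, ((insert a V).card : ℝ) /
      (1 + (insert a J \ insert a V).card) = (s + 1 : ℕ) / (1 + (J.card - s : ℕ)) :=
    fun V hV => by rw [insert_sdiff_insert, sdiff_insert_of_notMem haJ,
      card_insert_of_notMem (hnot V hV), hcard hV, (mem_powersetCard.1 hV).2]
  rw [sum_congr rfl e₁, sum_congr rfl e₂, sum_congr rfl e₃, sum_congr rfl e₄]
  simp only [sum_const, card_powersetCard, nsmul_eq_mul]
  exact choose_mul_div_add_le J.card s

theorem sum_range_choose_smul_le (hr0 : 0 ≤ r) (hr1 : r < 1) (n : ℕ) :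
    ∑ s ∈ range (n + 1), n.choose s •
      (r ^ s * (1 - r) ^ (n - s) * ((s : ℝ) / (1 + ((n - s : ℕ) : ℝ)))) ≤ r / (1 - r) := by
  have h1r : 0 < 1 - r := sub_pos.2 hr1
  have hshift : ∀ i ∈ range n, n.choose (i + 1) • (r ^ (i + 1) * (1 - r) ^ (n - (i + 1)) *
      (((i + 1 : ℕ) : ℝ) / (1 + ((n - (i + 1) : ℕ) : ℝ)))) =
      r / (1 - r) * (r ^ i * (1 - r) ^ (n - i) * n.choose i) := by
    intro i hi
    obtain ⟨d, rfl⟩ : ∃ d, n = i + 1 + d := ⟨n - (i + 1), by have := mem_range.1 hi; omega⟩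
    have hchoose : ((i + 1 + d).choose (i + 1) : ℝ) * (i + 1) = (i + 1 + d).choose i * (d + 1) := by
      exact_mod_cast (Nat.choose_succ_right_eq _ i).trans (by congr 1; omega)
    rw [show i + 1 + d - (i + 1) = d by omega, show i + 1 + d - i = d + 1 by omega, nsmul_eq_mul]
    push_cast
    field_simp
    linear_combination r ^ (i + 1) * (1 - r) ^ (d + 1) * hchoose
  have hbinom : ∑ i ∈ range (n + 1), r ^ i * (1 - r) ^ (n - i) * n.choose i = 1 := by
    rw [← add_pow, add_sub_cancel, one_pow]
  rw [sum_range_succ', sum_congr rfl hshift, ← mul_sum]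
  calc r / (1 - r) * ∑ i ∈ range n, r ^ i * (1 - r) ^ (n - i) * n.choose i + _
      ≤ r / (1 - r) * ∑ i ∈ range (n + 1), r ^ i * (1 - r) ^ (n - i) * n.choose i := by
        simp only [CharP.cast_eq_zero, zero_div, mul_zero, smul_zero, add_zero]
        exact mul_le_mul_of_nonneg_left (sum_le_sum_of_subset_of_nonneg
          (range_subset_range.2 n.le_succ) fun i _ _ => by positivity) (by positivity)
    _ = r / (1 - r) := by rw [hbinom, mul_one]

end Bernoulli

section ReverseMartingale

variable {N S V Y W : Finset ℕ} {k t : ℕ} {r : ℝ}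

/-- The `M_k` of the proof sketch, with `N` the nulls and `S` the indices with `p_j ≤ c`. -/
noncomputable def nullRatio (N S : Finset ℕ) (k : ℕ) : ℝ :=
  ((N.filter (· ≤ k)) ∩ S).card / (1 + ((N.filter (· ≤ k)) \ S).card)

theorem nullRatio_nonneg : 0 ≤ nullRatio N S k := by
  unfold nullRatio
  positivity

theorem filter_le_eq_erase (N : Finset ℕ) (t : ℕ) :
    N.filter (· ≤ t) = (N.filter (· ≤ t + 1)).erase (t + 1) := by
  ext j
  simp only [mem_filter, mem_erase]
  grind

theorem nullRatio_succ_of_notMem (S : Finset ℕ) (h : t + 1 ∉ N) :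
    nullRatio N S (t + 1) = nullRatio N S t := by
  rw [nullRatio, nullRatio, filter_le_eq_erase N t,
    erase_eq_of_notMem fun h' => h (mem_filter.1 h').1]

theorem nullRatio_union (hV : V ⊆ N.filter (· ≤ k)) (hY : Disjoint (N.filter (· ≤ k)) Y) :
    nullRatio N (V ∪ Y) k = V.card / (1 + ((N.filter (· ≤ k)) \ V).card) := by
  rw [nullRatio, inter_union_distrib_left, inter_eq_right.2 hV, disjoint_iff_inter_eq_empty.1 hY,
    union_empty, sdiff_union_distrib, sdiff_eq_self_of_disjoint hY, inter_eq_left.2 sdiff_subset]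

theorem nullRatio_union_of_succ (hV : V ⊆ N.filter (· ≤ t + 1))
    (hY : Disjoint (N.filter (· ≤ t + 1)) Y) :
    nullRatio N (V ∪ Y) t =
      (V.erase (t + 1)).card / (1 + (((N.filter (· ≤ t + 1)) \ V).erase (t + 1)).card) := by
  rw [nullRatio, filter_le_eq_erase N t, erase_inter, erase_sdiff_comm, inter_union_distrib_left,
    inter_eq_right.2 hV, disjoint_iff_inter_eq_empty.1 hY, union_empty, sdiff_union_distrib,
    sdiff_eq_self_of_disjoint hY, inter_eq_left.2 sdiff_subset]

theorem sum_powersetCard_nullRatio_le_succ (ht : t + 1 ∈ N)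
    (hY : Disjoint (N.filter (· ≤ t + 1)) Y) (s : ℕ) :
    ∑ V ∈ (N.filter (· ≤ t + 1)).powersetCard s, nullRatio N (V ∪ Y) t ≤
      ∑ V ∈ (N.filter (· ≤ t + 1)).powersetCard s, nullRatio N (V ∪ Y) (t + 1) := by
  have ha : t + 1 ∈ N.filter (· ≤ t + 1) := mem_filter.2 ⟨ht, le_rfl⟩
  calc ∑ V ∈ (N.filter (· ≤ t + 1)).powersetCard s, nullRatio N (V ∪ Y) t
      = ∑ V ∈ (N.filter (· ≤ t + 1)).powersetCard s, ((V.erase (t + 1)).card : ℝ) /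
          (1 + (((N.filter (· ≤ t + 1)) \ V).erase (t + 1)).card) :=
        sum_congr rfl fun V hV => nullRatio_union_of_succ (mem_powersetCard.1 hV).1 hY
    _ ≤ ∑ V ∈ (N.filter (· ≤ t + 1)).powersetCard s, (V.card : ℝ) /
          (1 + ((N.filter (· ≤ t + 1)) \ V).card) :=
        sum_powersetCard_erase_div_le ha s
    _ = _ := sum_congr rfl fun V hV => (nullRatio_union (mem_powersetCard.1 hV).1 hY).symm

/-- Whether `R S ≤ t` sees the nulls `j ≤ t + 1` only through how many of them lie in `S`: for
i.i.d. null indicators, `R` is a stopping time of the reverse filtration. -/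
def IsReverseStoppingTime (N : Finset ℕ) (R : Finset ℕ → ℕ) : Prop :=
  ∀ t (U U' Y : Finset ℕ), U ⊆ N.filter (· ≤ t + 1) → U' ⊆ N.filter (· ≤ t + 1) →
    U.card = U'.card → Disjoint (N.filter (· ≤ t + 1)) Y → (R (U ∪ Y) ≤ t ↔ R (U' ∪ Y) ≤ t)

variable {R : Finset ℕ → ℕ}

theorem sum_powersetCard_nullRatio_max_le_succ (hR : IsReverseStoppingTime N R)
    (ht : t + 1 ∈ N) (hY : Disjoint (N.filter (· ≤ t + 1)) Y) (s : ℕ) :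
    ∑ V ∈ (N.filter (· ≤ t + 1)).powersetCard s, nullRatio N (V ∪ Y) (max t (R (V ∪ Y))) ≤
      ∑ V ∈ (N.filter (· ≤ t + 1)).powersetCard s,
        nullRatio N (V ∪ Y) (max (t + 1) (R (V ∪ Y))) := by
  by_cases hstop : ∀ V ∈ (N.filter (· ≤ t + 1)).powersetCard s, R (V ∪ Y) ≤ t
  · calc _ = ∑ V ∈ (N.filter (· ≤ t + 1)).powersetCard s, nullRatio N (V ∪ Y) t :=
          sum_congr rfl fun V hV => by rw [max_eq_left (hstop V hV)]
      _ ≤ ∑ V ∈ (N.filter (· ≤ t + 1)).powersetCard s, nullRatio N (V ∪ Y) (t + 1) :=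
          sum_powersetCard_nullRatio_le_succ ht hY s
      _ = _ := sum_congr rfl fun V hV => by rw [max_eq_left ((hstop V hV).trans t.le_succ)]
  · push Not at hstop
    obtain ⟨V₀, hV₀, hlt⟩ := hstop
    refine (sum_congr rfl fun V hV => ?_).le
    obtain ⟨hVJ, hVs⟩ := mem_powersetCard.1 hV
    obtain ⟨hV₀J, hV₀s⟩ := mem_powersetCard.1 hV₀
    have hgt : t < R (V ∪ Y) := by
      by_contra! hle
      exact hlt.not_ge ((hR t V V₀ Y hVJ hV₀J (hVs.trans hV₀s.symm) hY).1 hle)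
    rw [max_eq_right hgt.le, max_eq_right hgt]

theorem sum_bernoulliWeight_nullRatio_max_le_succ (hR : IsReverseStoppingTime N R)
    (hW : Disjoint N W) (hr0 : 0 ≤ r) (hr1 : r ≤ 1) (t : ℕ) :
    ∑ U ∈ N.powerset, bernoulliWeight r N U * nullRatio N (U ∪ W) (max t (R (U ∪ W))) ≤
      ∑ U ∈ N.powerset, bernoulliWeight r N U *
        nullRatio N (U ∪ W) (max (t + 1) (R (U ∪ W))) := by
  by_cases ht : t + 1 ∈ N
  · have hJ := filter_subset (· ≤ t + 1) N
    rw [sum_bernoulliWeight_mul_eq hJ, sum_bernoulliWeight_mul_eq hJ]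
    refine sum_le_sum fun T hT => sum_le_sum fun s _ => mul_le_mul_of_nonneg_left ?_
      (mul_nonneg (bernoulliWeight_nonneg hr0 hr1 _ _)
        (mul_nonneg (pow_nonneg hr0 _) (pow_nonneg (sub_nonneg.2 hr1) _)))
    simp_rw [union_assoc]
    refine sum_powersetCard_nullRatio_max_le_succ hR ht (disjoint_union_right.2 ⟨?_, ?_⟩) s
    · exact disjoint_sdiff.mono_right (mem_powerset.1 hT)
    · exact hW.mono_left (filter_subset (· ≤ t + 1) N)
  · refine (sum_congr rfl fun U _ => ?_).le
    rcases le_or_gt (R (U ∪ W)) t with h | h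
    · rw [max_eq_left h, max_eq_left (h.trans t.le_succ), nullRatio_succ_of_notMem _ ht]
    · rw [max_eq_right h.le, max_eq_right h]

theorem sum_bernoulliWeight_nullRatio_le {m : ℕ} (hNm : ∀ j ∈ N, j ≤ m)
    (hR : IsReverseStoppingTime N R) (hRm : ∀ S, R S ≤ m) (hW : Disjoint N W) (hr0 : 0 ≤ r)
    (hr1 : r < 1) :
    ∑ U ∈ N.powerset, bernoulliWeight r N U * nullRatio N (U ∪ W) (R (U ∪ W)) ≤ r / (1 - r) := by
  have hmono : Monotone fun t => ∑ U ∈ N.powerset,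
      bernoulliWeight r N U * nullRatio N (U ∪ W) (max t (R (U ∪ W))) :=
    monotone_nat_of_le_succ (sum_bernoulliWeight_nullRatio_max_le_succ hR hW hr0 hr1.le)
  have hN : N.filter (· ≤ m) = N := filter_true_of_mem hNm
  have hterminal : ∀ U ∈ N.powerset, bernoulliWeight r N U *
      nullRatio N (U ∪ W) (max m (R (U ∪ W))) =
      r ^ U.card * (1 - r) ^ (N.card - U.card) * (U.card / (1 + (N.card - U.card : ℕ))) := by
    intro U hU
    have hUN := mem_powerset.1 hU
    rw [max_eq_left (hRm _), nullRatio_union (by rwa [hN]) (by rwa [hN]), hN,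
      card_sdiff_of_subset hUN, bernoulliWeight]
  calc _ = ∑ U ∈ N.powerset, bernoulliWeight r N U * nullRatio N (U ∪ W) (max 0 (R (U ∪ W))) := by
        simp only [Nat.zero_max]
    _ ≤ _ := hmono (Nat.zero_le m)
    _ = _ := sum_congr rfl hterminal
    _ = _ := sum_powerset_apply_card (fun s => r ^ s * (1 - r) ^ (N.card - s) *
          ((s : ℝ) / (1 + (N.card - s : ℕ))))
    _ ≤ r / (1 - r) := sum_range_choose_smul_le hr0 hr1 N.card

end ReverseMartingale

section Stop

variable {c q : ℝ} {K N : Finset ℕ}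

theorem fstp0Stop_le_iff (p : ℕ → ℝ) (t : ℕ) :
    fstp0Stop c q K p ≤ t ↔
      ∀ k ∈ K, (seqCountAbove p c k : ℝ) / max (k : ℝ) 1 ≤ (1 - c) * q → k ≤ t := by
  dsimp only [fstp0Stop]
  split_ifs with h
  · simp [max'_le_iff]
  · simp only [not_nonempty_iff_eq_empty, filter_eq_empty_iff] at h
    simp only [zero_le, true_iff]
    exact fun k hk hk' => absurd hk' (h hk)

theorem fstp0Stop_spec {p : ℕ → ℝ} (h : fstp0Stop c q K p ≠ 0) :
    fstp0Stop c q K p ∈ K ∧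
      (seqCountAbove p c (fstp0Stop c q K p) : ℝ) / max (fstp0Stop c q K p : ℝ) 1 ≤
        (1 - c) * q := by
  dsimp only [fstp0Stop] at h ⊢
  split_ifs at h ⊢ with hne
  · exact mem_filter.1 (max'_mem _ hne)
  · exact absurd rfl h

theorem fstp0Stop_congr {p p' : ℕ → ℝ} (h : ∀ k ∈ K, seqCountAbove p c k = seqCountAbove p' c k) :
    fstp0Stop c q K p = fstp0Stop c q K p' := by
  have hcand : (K.filter fun k => (seqCountAbove p c k : ℝ) / max (k : ℝ) 1 ≤ (1 - c) * q) =
      K.filter fun k => (seqCountAbove p' c k : ℝ) / max (k : ℝ) 1 ≤ (1 - c) * q :=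
    filter_congr fun k hk => by rw [h k hk]
  simp only [fstp0Stop, hcand]

/-- The p-values `0` on `S` and `1` off `S` lie below any `c ∈ [0, 1)` exactly on `S`. -/
noncomputable def stopOfSet (c q : ℝ) (K S : Finset ℕ) : ℕ :=
  fstp0Stop c q K fun j => if j ∈ S then 0 else 1

theorem seqCountAbove_indicator (hc0 : 0 ≤ c) (hc1 : c < 1) (S : Finset ℕ) (k : ℕ) :
    seqCountAbove (fun j => if j ∈ S then 0 else 1) c k = (Icc 1 k \ S).card := by
  rw [seqCountAbove, sdiff_eq_filter]
  congr 1
  refine filter_congr fun j _ => ?_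
  split_ifs with hj <;> simp [hj, hc0, hc1]

theorem stopOfSet_le {m : ℕ} (hK : K ⊆ Icc 1 m) (S : Finset ℕ) : stopOfSet c q K S ≤ m :=
  (fstp0Stop_le_iff _ _).2 fun _ hk _ => (mem_Icc.1 (hK hk)).2

theorem isReverseStoppingTime_stopOfSet (hc0 : 0 ≤ c) (hc1 : c < 1) (hN : ∀ j ∈ N, 1 ≤ j) :
    IsReverseStoppingTime N (stopOfSet c q K) := by
  intro t U U' Y hU hU' hcard hY
  have hcount : ∀ k, t < k → ∀ V ⊆ N.filter (· ≤ t + 1),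
      (Icc 1 k \ (V ∪ Y)).card = (Icc 1 k \ Y).card - V.card := by
    intro k hk V hV
    have hVsub : V ⊆ Icc 1 k \ Y := fun j hj => by
      obtain ⟨hjN, hjt⟩ := mem_filter.1 (hV hj)
      exact mem_sdiff.2 ⟨mem_Icc.2 ⟨hN j hjN, by omega⟩, disjoint_left.1 hY (hV hj)⟩
    rw [union_comm, sdiff_union_distrib, ← Finset.sdiff_sdiff_left', card_sdiff_of_subset hVsub]
  simp only [stopOfSet, fstp0Stop_le_iff, seqCountAbove_indicator hc0 hc1]
  refine forall₂_congr fun k _ => ?_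
  rcases le_or_gt k t with hk | hk
  · simp [hk]
  · rw [hcount k hk U hU, hcount k hk U' hU', hcard]

theorem fstp0Stop_eq_stopOfSet (hc0 : 0 ≤ c) (hc1 : c < 1) {m : ℕ} (hK : K ⊆ Icc 1 m)
    (p : ℕ → ℝ) : fstp0Stop c q K p = stopOfSet c q K ((Icc 1 m).filter fun j => p j ≤ c) := by
  refine fstp0Stop_congr fun k hk => ?_
  have hkm := (mem_Icc.1 (hK hk)).2
  rw [seqCountAbove_indicator hc0 hc1, seqCountAbove, sdiff_eq_filter]
  congr 1
  refine filter_congr fun j hj => ?_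
  have hjk := mem_Icc.1 hj
  simp only [mem_filter, mem_Icc, not_and, not_le]
  exact ⟨fun h _ => h, fun h => h ⟨hjk.1, hjk.2.trans hkm⟩⟩

theorem add_div_add_inv_le {x y R α : ℝ} (hx : 0 ≤ x) (hy : 0 ≤ y) (hR : 0 ≤ R) (hα : 0 < α)
    (hyR : y ≤ α * R) : (x + y) / (R + α⁻¹) ≤ α * (1 + x / (1 + y)) := by
  rw [div_le_iff₀ (by positivity)]
  calc x + y ≤ (1 + x / (1 + y)) * (1 + y) := by
        rw [add_mul, div_mul_cancel₀ _ (by positivity)]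
        linarith
    _ ≤ (1 + x / (1 + y)) * (α * (R + α⁻¹)) := by
        gcongr
        rw [mul_add, mul_inv_cancel₀ hα.ne']
        linarith
    _ = α * (1 + x / (1 + y)) * (R + α⁻¹) := by ring

theorem card_filter_div_le_nullRatio (hc0 : 0 ≤ c) (hc1 : c < 1) (hq0 : 0 < q) (hN : ∀ j ∈ N, 1 ≤ j)
    (S : Finset ℕ) :
    ((N.filter (· ≤ stopOfSet c q K S)).card : ℝ) / (stopOfSet c q K S + q⁻¹ / (1 - c)) ≤
      (1 - c) * q * (1 + nullRatio N S (stopOfSet c q K S)) := by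
  have hα : 0 < (1 - c) * q := mul_pos (sub_pos.2 hc1) hq0
  rcases Nat.eq_zero_or_pos (stopOfSet c q K S) with hR | hR
  · rw [hR, filter_eq_empty_iff.2 fun j hj => by have := hN j hj; omega]
    simp only [card_empty, CharP.cast_eq_zero, zero_div]
    exact mul_nonneg hα.le (add_nonneg zero_le_one nullRatio_nonneg)
  have hcond : ((Icc 1 (stopOfSet c q K S) \ S).card : ℝ) / max (stopOfSet c q K S : ℝ) 1 ≤
      (1 - c) * q := by
    simpa only [stopOfSet, seqCountAbove_indicator hc0 hc1] using (fstp0Stop_spec hR.ne').2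
  set R := stopOfSet c q K S
  have hR1 : (1 : ℝ) ≤ R := by exact_mod_cast hR
  rw [max_eq_left hR1, div_le_iff₀ (by positivity)] at hcond
  set J := N.filter (· ≤ R)
  have hJS : J \ S ⊆ Icc 1 R \ S := sdiff_subset_sdiff (fun j hj => by
    obtain ⟨hjN, hjR⟩ := mem_filter.1 hj
    exact mem_Icc.2 ⟨hN j hjN, hjR⟩) subset_rfl
  have hy : ((J \ S).card : ℝ) ≤ (1 - c) * q * R :=
    le_trans (by exact_mod_cast card_le_card hJS) hcond
  rw [nullRatio, ← card_inter_add_card_sdiff J S, Nat.cast_add,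
    show q⁻¹ / (1 - c) = ((1 - c) * q)⁻¹ by rw [mul_inv, div_eq_mul_inv, mul_comm]]
  exact add_div_add_inv_le (Nat.cast_nonneg _) (Nat.cast_nonneg _) (Nat.cast_nonneg _) hα hy

theorem sum_bernoulliWeight_fdp_le {m : ℕ} {r : ℝ} {W : Finset ℕ} (hN : N ⊆ Icc 1 m)
    (hK : K ⊆ Icc 1 m) (hW : Disjoint N W) (hc0 : 0 ≤ c) (hc1 : c < 1) (hq0 : 0 < q)
    (hr0 : 0 ≤ r) (hrc : r ≤ c) :
    ∑ U ∈ N.powerset, bernoulliWeight r N U *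
      (((N.filter (· ≤ stopOfSet c q K (U ∪ W))).card : ℝ) /
        (stopOfSet c q K (U ∪ W) + q⁻¹ / (1 - c))) ≤ q := by
  have hN1 : ∀ j ∈ N, 1 ≤ j := fun j hj => (mem_Icc.1 (hN hj)).1
  have hNm : ∀ j ∈ N, j ≤ m := fun j hj => (mem_Icc.1 (hN hj)).2
  have h1c : 0 < 1 - c := sub_pos.2 hc1
  have hmart := sum_bernoulliWeight_nullRatio_le hNm (isReverseStoppingTime_stopOfSet (q := q)
    (K := K) hc0 hc1 hN1) (stopOfSet_le hK) hW hr0 (hrc.trans_lt hc1)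
  calc _ ≤ ∑ U ∈ N.powerset, bernoulliWeight r N U *
        ((1 - c) * q * (1 + nullRatio N (U ∪ W) (stopOfSet c q K (U ∪ W)))) :=
        sum_le_sum fun U _ => mul_le_mul_of_nonneg_left
          (card_filter_div_le_nullRatio hc0 hc1 hq0 hN1 _)
          (bernoulliWeight_nonneg hr0 (hrc.trans hc1.le) N U)
    _ = (1 - c) * q * (∑ U ∈ N.powerset, bernoulliWeight r N U + ∑ U ∈ N.powerset,
        bernoulliWeight r N U * nullRatio N (U ∪ W) (stopOfSet c q K (U ∪ W))) := by
        rw [← sum_add_distrib, mul_sum]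
        exact sum_congr rfl fun U _ => by ring
    _ ≤ (1 - c) * q * (1 + c / (1 - c)) := by
        rw [sum_bernoulliWeight]
        gcongr
        exact hmart.trans (by gcongr)
    _ = q := by
        field_simp
        ring

end Stop

section Probability

variable {Ω : Type*} [MeasurableSpace Ω] {μ : Measure Ω}

theorem integral_comp_eq_sum [IsFiniteMeasure μ] {α : Type*} {X : Ω → α} {F : Finset α}
    (hF : ∀ ω, X ω ∈ F) (hX : ∀ x ∈ F, MeasurableSet (X ⁻¹' {x})) (h : α → ℝ) :
    ∫ ω, h (X ω) ∂μ = ∑ x ∈ F, h x * μ.real (X ⁻¹' {x}) := by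
  have hpt : ∀ ω, h (X ω) = ∑ x ∈ F, (X ⁻¹' {x}).indicator (fun _ => h x) ω := fun ω => by
    rw [sum_eq_single_of_mem (X ω) (hF ω)]
    · exact (Set.indicator_of_mem rfl _).symm
    · intro x _ hx
      exact Set.indicator_of_notMem (s := X ⁻¹' {x})
        (fun hω => hx (Set.mem_singleton_iff.1 hω).symm) _
  simp_rw [hpt]
  rw [integral_finsetSum _ fun x hx => (integrable_const _).indicator (hX x hx)]
  exact sum_congr rfl fun x hx => by
    rw [integral_indicator_const _ (hX x hx), smul_eq_mul, mul_comm]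

theorem sum_measureReal_preimage_eq_one [IsProbabilityMeasure μ] {α : Type*} {X : Ω → α}
    {F : Finset α} (hF : ∀ ω, X ω ∈ F) (hX : ∀ x ∈ F, MeasurableSet (X ⁻¹' {x})) :
    ∑ x ∈ F, μ.real (X ⁻¹' {x}) = 1 := by
  simpa using (integral_comp_eq_sum (μ := μ) hF hX fun _ => (1 : ℝ)).symm

variable {pv : Ω → ℕ → ℝ} {c : ℝ}

theorem measurableSet_filter_eq (hmeas : ∀ j, Measurable fun ω => pv ω j) (A S : Finset ℕ) :
    MeasurableSet {ω | A.filter (fun j => pv ω j ≤ c) = S} := by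
  simp only [Finset.ext_iff, mem_filter]
  measurability

variable {ν : Measure ℝ} [IsProbabilityMeasure ν] {N : Finset ℕ}

theorem measureReal_forall_iff_eq_bernoulliWeight (hmeas : ∀ j, Measurable fun ω => pv ω j)
    (hlaw : ∀ j ∈ N, Measure.map (fun ω => pv ω j) μ = ν)
    (hindep : iIndepFun (fun (j : {j // j ∈ N}) ω => pv ω j.1) μ) {U : Finset ℕ} (hU : U ⊆ N) :
    μ.real {ω | ∀ j : {j // j ∈ N}, (pv ω j ≤ c ↔ j.1 ∈ U)} =
      bernoulliWeight (ν.real (Set.Iic c)) N U := by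
  set E : {j // j ∈ N} → Set ℝ := fun j => if j.1 ∈ U then Set.Iic c else (Set.Iic c)ᶜ
  have hE : ∀ j, MeasurableSet (E j) := fun j => by by_cases h : j.1 ∈ U <;> simp [E, h]
  have hνE : ∀ j, ν.real (E j) = if j.1 ∈ U then ν.real (Set.Iic c) else 1 - ν.real (Set.Iic c) :=
    fun j => by
      by_cases h : j.1 ∈ U
      · simp only [E, if_pos h]
      · simp only [E, if_neg h, measureReal_compl measurableSet_Iic, probReal_univ]
  have hset : {ω | ∀ j : {j // j ∈ N}, (pv ω j ≤ c ↔ j.1 ∈ U)} =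
      ⋂ j ∈ (univ : Finset {j // j ∈ N}), (fun ω => pv ω j.1) ⁻¹' E j := by
    ext ω
    simp only [Set.mem_ofPred_eq, mem_univ, Set.iInter_true, Set.mem_iInter, Set.mem_preimage]
    refine forall_congr' fun j => ?_
    by_cases h : j.1 ∈ U <;> simp [E, h]
  rw [hset, measureReal_def, hindep.measure_inter_preimage_eq_mul univ fun j _ => hE j,
    ENNReal.toReal_prod]
  simp_rw [← measureReal_def, ← map_measureReal_apply (hmeas _) (hE _), hlaw _ (Subtype.prop _),
    hνE]
  rw [prod_coe_sort N fun j => if j ∈ U then ν.real (Set.Iic c) else 1 - ν.real (Set.Iic c),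
    prod_ite_mem_eq_bernoulliWeight hU]

theorem measureReal_filter_eq_union (hmeas : ∀ j, Measurable fun ω => pv ω j)
    (hlaw : ∀ j ∈ N, Measure.map (fun ω => pv ω j) μ = ν)
    (hnullindep : iIndepFun (fun (j : {j // j ∈ N}) ω => pv ω j.1) μ) {A : Finset ℕ}
    (hblockindep : IndepFun (fun ω (j : {j // j ∈ N}) => pv ω j.1)
      (fun ω (j : {j : ℕ // j ∈ A ∧ j ∉ N}) => pv ω j.1) μ)
    (hN : N ⊆ A) {U V : Finset ℕ} (hU : U ⊆ N) (hV : V ⊆ A \ N) :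
    μ.real {ω | A.filter (fun j => pv ω j ≤ c) = U ∪ V} =
      bernoulliWeight (ν.real (Set.Iic c)) N U *
        μ.real {ω | (A \ N).filter (fun j => pv ω j ≤ c) = V} := by
  have hV' : ∀ j ∈ V, j ∈ A ∧ j ∉ N := fun j hj => mem_sdiff.1 (hV hj)
  set SN : Set ({j // j ∈ N} → ℝ) := {x | ∀ j, (x j ≤ c ↔ j.1 ∈ U)}
  set SB : Set ({j : ℕ // j ∈ A ∧ j ∉ N} → ℝ) := {x | ∀ j, (x j ≤ c ↔ j.1 ∈ V)}
  have hSN : MeasurableSet SN := by measurability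
  have hSB : MeasurableSet SB := by measurability
  have hB : {ω | (A \ N).filter (fun j => pv ω j ≤ c) = V} =
      (fun ω (j : {j : ℕ // j ∈ A ∧ j ∉ N}) => pv ω j.1) ⁻¹' SB := by
    ext ω
    simp only [SB, Set.mem_ofPred_eq, Set.mem_preimage, Subtype.forall, Finset.ext_iff, mem_filter,
      mem_sdiff]
    grind
  have hsplit : {ω | A.filter (fun j => pv ω j ≤ c) = U ∪ V} =
      (fun ω (j : {j // j ∈ N}) => pv ω j.1) ⁻¹' SN ∩
        (fun ω (j : {j : ℕ // j ∈ A ∧ j ∉ N}) => pv ω j.1) ⁻¹' SB := by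
    ext ω
    simp only [SN, SB, Set.mem_ofPred_eq, Set.mem_inter_iff, Set.mem_preimage, Subtype.forall,
      Finset.ext_iff, mem_filter, mem_union]
    grind
  rw [hsplit, measureReal_def, hblockindep.measure_inter_preimage_eq_mul _ _ hSN hSB,
    ENNReal.toReal_mul, ← measureReal_def, ← measureReal_def, hB,
    ← measureReal_forall_iff_eq_bernoulliWeight hmeas hlaw hnullindep hU]
  rfl

theorem integral_le_of_forall_sum_bernoulliWeight_le [IsProbabilityMeasure μ]
    (hmeas : ∀ j, Measurable fun ω => pv ω j)
    (hlaw : ∀ j ∈ N, Measure.map (fun ω => pv ω j) μ = ν)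
    (hnullindep : iIndepFun (fun (j : {j // j ∈ N}) ω => pv ω j.1) μ) {A : Finset ℕ}
    (hblockindep : IndepFun (fun ω (j : {j // j ∈ N}) => pv ω j.1)
      (fun ω (j : {j : ℕ // j ∈ A ∧ j ∉ N}) => pv ω j.1) μ)
    (hN : N ⊆ A) (f : Finset ℕ → ℝ) (C : ℝ)
    (hf : ∀ V ⊆ A \ N, ∑ U ∈ N.powerset, bernoulliWeight (ν.real (Set.Iic c)) N U * f (U ∪ V) ≤ C) :
    ∫ ω, f (A.filter fun j => pv ω j ≤ c) ∂μ ≤ C := by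
  have hmem : ∀ (B : Finset ℕ) ω, B.filter (fun j => pv ω j ≤ c) ∈ B.powerset :=
    fun B ω => mem_powerset.2 (filter_subset _ B)
  have hfib : ∀ (B S : Finset ℕ), S ∈ B.powerset →
      MeasurableSet ((fun ω => B.filter fun j => pv ω j ≤ c) ⁻¹' {S}) :=
    fun B S _ => measurableSet_filter_eq hmeas B S
  have hsplit := sum_powerset_union (disjoint_sdiff (s := N) (t := A))
    fun S => f S * μ.real {ω | A.filter (fun j => pv ω j ≤ c) = S}
  rw [union_sdiff_of_subset hN] at hsplit
  calc ∫ ω, f (A.filter fun j => pv ω j ≤ c) ∂μ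
      = ∑ S ∈ A.powerset, f S * μ.real {ω | A.filter (fun j => pv ω j ≤ c) = S} :=
        integral_comp_eq_sum (hmem A) (hfib A) f
    _ = ∑ V ∈ (A \ N).powerset, (∑ U ∈ N.powerset,
          bernoulliWeight (ν.real (Set.Iic c)) N U * f (U ∪ V)) *
          μ.real {ω | (A \ N).filter (fun j => pv ω j ≤ c) = V} := by
        rw [hsplit, sum_comm]
        refine sum_congr rfl fun V hV => ?_
        rw [sum_mul]
        refine sum_congr rfl fun U hU => ?_
        rw [measureReal_filter_eq_union hmeas hlaw hnullindep hblockindep hN (mem_powerset.1 hU)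
          (mem_powerset.1 hV)]
        ring
    _ ≤ ∑ V ∈ (A \ N).powerset, C * μ.real {ω | (A \ N).filter (fun j => pv ω j ≤ c) = V} :=
        sum_le_sum fun V hV => mul_le_mul_of_nonneg_right (hf V (mem_powerset.1 hV))
          measureReal_nonneg
    _ = C := by
        rw [← mul_sum]
        exact (congrArg (C * ·) (sum_measureReal_preimage_eq_one (hmem _) (hfib _))).trans
          (mul_one C)

end Probability

end FSTP0

theorem fstp0_modified_FDR_control_general (m : ℕ)
    {Ω : Type*} [MeasurableSpace Ω] (μ : Measure Ω) [IsProbabilityMeasure μ]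
    (pv : Ω → ℕ → ℝ) (hmeas : ∀ j, Measurable fun ω => pv ω j)
    (N : Finset ℕ) (hN : N ⊆ Finset.Icc 1 m)
    (ν : Measure ℝ) [IsProbabilityMeasure ν]
    (hlaw : ∀ j ∈ N, Measure.map (fun ω => pv ω j) μ = ν)
    (hdom : ∀ u : ℝ, 0 ≤ u → u ≤ 1 → ν {x | x ≤ u} ≤ ENNReal.ofReal u)
    (hnullindep : iIndepFun
      (fun (j : {j // j ∈ N}) ω => pv ω j.1) μ)
    (hblockindep : IndepFun (fun ω (j : {j // j ∈ N}) => pv ω j.1)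
      (fun ω (j : {j : ℕ // j ∈ Finset.Icc 1 m ∧ j ∉ N}) => pv ω j.1) μ)
    (c : ℝ) (hc0 : 0 < c) (hc1 : c < 1)
    (q : ℝ) (hq0 : 0 < q)
    (K : Finset ℕ) (hK : K ⊆ Finset.Icc 1 m) :
    ∫ ω, ((N.filter fun j => j ≤ fstp0Stop c q K (pv ω)).card : ℝ) /
          ((fstp0Stop c q K (pv ω) : ℝ) + q⁻¹ / (1 - c)) ∂μ ≤ q := by
  have hrc : ν.real (Set.Iic c) ≤ c :=
    ENNReal.toReal_le_of_le_ofReal hc0.le (hdom c hc0.le hc1.le)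
  simp_rw [FSTP0.fstp0Stop_eq_stopOfSet hc0.le hc1 hK]
  exact FSTP0.integral_le_of_forall_sum_bernoulliWeight_le hmeas hlaw hnullindep hblockindep hN
    (fun S => ((N.filter (· ≤ FSTP0.stopOfSet c q K S)).card : ℝ) /
      (FSTP0.stopOfSet c q K S + q⁻¹ / (1 - c)))
    q fun V hV => FSTP0.sum_bernoulliWeight_fdp_le hN hK (Finset.disjoint_sdiff.mono_right hV)
      hc0.le hc1 hq0 measureReal_nonneg hrc

/-- **Modified FDR control for FSTP0** (Theorem 3): `p_1, …, p_m` are p-values whose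
null members are i.i.d., stochastically dominate the uniform distribution, and are
independent (as a collection) of the non-null p-values.  Fix `c ∈ (0,1)`,
`q ∈ (0,1]` and `K ⊆ {1,…,m}`; rejecting `H_j` for all `j ≤ k̂₀`, with
`V = #{null j ≤ k̂₀}` and `R = k̂₀`, we have `E[ V / (R + q⁻¹/(1−c)) ] ≤ q`. -/
theorem fstp0_modified_FDR_control (m : ℕ)
    {Ω : Type*} [MeasurableSpace Ω] (μ : Measure Ω) [IsProbabilityMeasure μ]
    (pv : Ω → ℕ → ℝ) (hmeas : ∀ j, Measurable fun ω => pv ω j)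
    (hrange : ∀ ω, ∀ j ∈ Finset.Icc 1 m, pv ω j ∈ Set.Icc (0 : ℝ) 1)
    (N : Finset ℕ) (hN : N ⊆ Finset.Icc 1 m)
    (ν : Measure ℝ) [IsProbabilityMeasure ν]
    (hlaw : ∀ j ∈ N, Measure.map (fun ω => pv ω j) μ = ν)
    (hdom : ∀ u : ℝ, 0 ≤ u → u ≤ 1 → ν {x | x ≤ u} ≤ ENNReal.ofReal u)
    (hnullindep : iIndepFun
      (fun (j : {j // j ∈ N}) ω => pv ω j.1) μ)
    (hblockindep : IndepFun (fun ω (j : {j // j ∈ N}) => pv ω j.1)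
      (fun ω (j : {j : ℕ // j ∈ Finset.Icc 1 m ∧ j ∉ N}) => pv ω j.1) μ)
    (c : ℝ) (hc0 : 0 < c) (hc1 : c < 1)
    (q : ℝ) (hq0 : 0 < q) (hq1 : q ≤ 1)
    (K : Finset ℕ) (hK : K ⊆ Finset.Icc 1 m) :
    ∫ ω, ((N.filter fun j => j ≤ fstp0Stop c q K (pv ω)).card : ℝ) /
          ((fstp0Stop c q K (pv ω) : ℝ) + q⁻¹ / (1 - c)) ∂μ ≤ q :=
  fstp0_modified_FDR_control_general m μ pv hmeas N hN ν hlaw hdom hnullindep hblockindep c hc0 hc1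
    q hq0 K hK
end

section
/- Backward super-martingale property: for k = m, m−1, …, 1, 0, put V⁺(k) = #{null j ≤ k : p_j ≤ c} and V⁻(k) = #{null j ≤ k : p_j > c} (with V±(0) = 0), and let 𝓕_k be the σ-algebra generated by all the non-null p-values together with (V⁺(k′), V⁻(k′)) for all k′ ≥ k. Then M(k) = V⁺(k) / (1 + V⁻(k)) satisfies E[ M(k−1) | 𝓕_k ] ≤ M(k) for every k ≥ 1, i.e. M is a super-martingale with respect to the backward filtration (𝓕_k). -/
open MeasureTheory ProbabilityTheory

/-- `V⁺(k) = #{null j ≤ k : p_j ≤ c}`, p-values indexed by `j ∈ {1,…,m}`. -/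
noncomputable def nullCountBelow (N : Finset ℕ) (pv : ℕ → ℝ) (c : ℝ) (k : ℕ) : ℕ :=
  (N.filter fun j => j ≤ k ∧ pv j ≤ c).card

/-- `V⁻(k) = #{null j ≤ k : p_j > c}`. -/
noncomputable def nullCountAbove (N : Finset ℕ) (pv : ℕ → ℝ) (c : ℝ) (k : ℕ) : ℕ :=
  (N.filter fun j => j ≤ k ∧ c < pv j).card

/-- The σ-algebra `𝓕_k` generated by all the non-null p-values together with
`(V⁺(k′), V⁻(k′))` for all `k′ ≥ k`. -/
noncomputable def seqFiltration {Ω : Type*} (m : ℕ) (N : Finset ℕ) (pv : Ω → ℕ → ℝ)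
    (c : ℝ) (k : ℕ) : MeasurableSpace Ω :=
  MeasurableSpace.comap
      (fun ω => fun j : {j : ℕ // j ∈ Finset.Icc 1 m ∧ j ∉ N} => pv ω j.1) inferInstance
    ⊔ ⨆ k' ∈ Set.Ici k,
        MeasurableSpace.comap
          (fun ω => ((nullCountBelow N (pv ω) c k', nullCountAbove N (pv ω) c k') : ℕ × ℕ))
          inferInstance

/-!
Only the case where `k` is a null index matters: otherwise `M(k-1) = M(k)`. The σ-algebra `𝓕_k`
is generated by the non-null p-values and the counts at levels `≥ k`, and these are unchanged when
`p_k` is swapped with any null `p_j`, `j ≤ k`; since the null p-values are i.i.d. and independent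
of the non-null ones, each such swap also preserves the joint law. So `∫_A M(k-1)` may be replaced
by its average over the `V⁺(k) + V⁻(k)` swaps. In `V⁺(k)` of them `p_k ≤ c` and `M(k-1)` becomes
`(V⁺(k) - 1)/(1 + V⁻(k))`, in the other `V⁻(k)` it becomes `V⁺(k)/V⁻(k)`; the average is exactly
`M(k)` when `V⁻(k) > 0`, and at most `M(k)` when `V⁻(k) = 0`.
-/

open Finset

section Counting

variable {N : Finset ℕ}

theorem card_filter_le_and_swap (Q : ℕ → Prop) [DecidablePred Q] {i j r : ℕ}
    (hi : i ∈ N) (hj : j ∈ N) (hir : i ≤ r) (hjr : j ≤ r) :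
    #{l ∈ N | l ≤ r ∧ Q (Equiv.swap i j l)} = #{l ∈ N | l ≤ r ∧ Q l} :=
  card_equiv (Equiv.swap i j) fun l => by
    simp only [mem_filter, Equiv.swap_apply_def]
    split_ifs <;> grind

theorem card_filter_le_succ_and (Q : ℕ → Prop) [DecidablePred Q] (n : ℕ) :
    #{l ∈ N | l ≤ n + 1 ∧ Q l}
      = #{l ∈ N | l ≤ n ∧ Q l} + if n + 1 ∈ N ∧ Q (n + 1) then 1 else 0 := by
  have hsplit : {l ∈ N | l ≤ n + 1 ∧ Q l}
      = {l ∈ N | l ≤ n ∧ Q l} ∪ {l ∈ N | l = n + 1 ∧ Q l} := by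
    ext l; simp only [mem_filter, mem_union]; grind
  rw [hsplit, card_union_of_disjoint (disjoint_filter.mpr fun l _ h₁ h₂ => by omega)]
  congr 1
  split_ifs with h
  · exact card_eq_one.mpr ⟨n + 1, by ext l; simp only [mem_filter, mem_singleton]; grind⟩
  · exact card_eq_zero.mpr (filter_eq_empty_iff.mpr fun l hl ⟨hl', hQ⟩ => h ⟨hl' ▸ hl, hl' ▸ hQ⟩)

end Counting

noncomputable def nullRatio (N : Finset ℕ) (c : ℝ) (r : ℕ) (p : ℕ → ℝ) : ℝ :=
  nullCountBelow N p c r / (1 + nullCountAbove N p c r)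

section NullRatio

variable {N : Finset ℕ} {c : ℝ} {p : ℕ → ℝ}

theorem nullCountBelow_comp_swap {i j r : ℕ} (hi : i ∈ N) (hj : j ∈ N) (hir : i ≤ r)
    (hjr : j ≤ r) : nullCountBelow N (p ∘ Equiv.swap i j) c r = nullCountBelow N p c r :=
  card_filter_le_and_swap (fun l => p l ≤ c) hi hj hir hjr

theorem nullCountAbove_comp_swap {i j r : ℕ} (hi : i ∈ N) (hj : j ∈ N) (hir : i ≤ r)
    (hjr : j ≤ r) : nullCountAbove N (p ∘ Equiv.swap i j) c r = nullCountAbove N p c r :=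
  card_filter_le_and_swap (fun l => c < p l) hi hj hir hjr

theorem nullCountBelow_succ (n : ℕ) : nullCountBelow N p c (n + 1)
    = nullCountBelow N p c n + if n + 1 ∈ N ∧ p (n + 1) ≤ c then 1 else 0 :=
  card_filter_le_succ_and (fun l => p l ≤ c) n

theorem nullCountAbove_succ (n : ℕ) : nullCountAbove N p c (n + 1)
    = nullCountAbove N p c n + if n + 1 ∈ N ∧ c < p (n + 1) then 1 else 0 :=
  card_filter_le_succ_and (fun l => c < p l) n

theorem nullCountBelow_indicator (r : ℕ) :
    nullCountBelow N ((N : Set ℕ).indicator p) c r = nullCountBelow N p c r := by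
  unfold nullCountBelow
  rw [filter_congr fun j hj => by rw [Set.indicator_of_mem (mem_coe.mpr hj)]]

theorem nullCountAbove_indicator (r : ℕ) :
    nullCountAbove N ((N : Set ℕ).indicator p) c r = nullCountAbove N p c r := by
  unfold nullCountAbove
  rw [filter_congr fun j hj => by rw [Set.indicator_of_mem (mem_coe.mpr hj)]]

theorem nullRatio_indicator (r : ℕ) :
    nullRatio N c r ((N : Set ℕ).indicator p) = nullRatio N c r p := by
  rw [nullRatio, nullCountBelow_indicator, nullCountAbove_indicator, nullRatio]

theorem nullRatio_succ_of_notMem {n : ℕ} (hn : n + 1 ∉ N) :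
    nullRatio N c (n + 1) p = nullRatio N c n p := by
  simp [nullRatio, nullCountBelow_succ, nullCountAbove_succ, hn]

theorem nullRatio_nonneg (r : ℕ) : 0 ≤ nullRatio N c r p := by
  unfold nullRatio; positivity

theorem nullRatio_le_card (r : ℕ) : nullRatio N c r p ≤ #N :=
  (div_le_self (Nat.cast_nonneg _) (le_add_of_nonneg_right (Nat.cast_nonneg _))).trans
    (Nat.cast_le.mpr (card_filter_le _ _))

theorem sum_nullRatio_comp_swap_le (p : ℕ → ℝ) {n : ℕ} (hn : n + 1 ∈ N) :
    ∑ j ∈ N with j ≤ n + 1, nullRatio N c n (p ∘ Equiv.swap j (n + 1))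
      ≤ #{j ∈ N | j ≤ n + 1} * nullRatio N c (n + 1) p := by
  set a : ℝ := (nullCountBelow N p c (n + 1) : ℝ)
  set b : ℝ := (nullCountAbove N p c (n + 1) : ℝ)
  have hterm : ∀ j ∈ {j ∈ N | j ≤ n + 1}, nullRatio N c n (p ∘ Equiv.swap j (n + 1))
      = if p j ≤ c then (a - 1) / (1 + b) else a / b := by
    intro j hj
    obtain ⟨hjN, hjn⟩ := mem_filter.mp hj
    have hB := nullCountBelow_succ (N := N) (c := c) (p := p ∘ Equiv.swap j (n + 1)) n
    have hA := nullCountAbove_succ (N := N) (c := c) (p := p ∘ Equiv.swap j (n + 1)) n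
    rw [nullCountBelow_comp_swap hjN hn hjn le_rfl] at hB
    rw [nullCountAbove_comp_swap hjN hn hjn le_rfl] at hA
    simp only [Function.comp_apply, Equiv.swap_apply_right, hn, true_and] at hA hB
    unfold nullRatio
    split_ifs at hA hB ⊢ with hjc <;> simp only [a, b, hA, hB] <;> push_cast <;> grind
  have hbelow : (#{j ∈ N | j ≤ n + 1 ∧ p j ≤ c} : ℝ) = a := rfl
  have habove : (#{j ∈ N | j ≤ n + 1 ∧ ¬p j ≤ c} : ℝ) = b := by simp only [not_le]; rfl
  have hcard : (#{j ∈ N | j ≤ n + 1} : ℝ) = a + b := by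
    rw [← card_filter_add_card_filter_not (fun j => p j ≤ c), filter_filter,
      filter_filter, Nat.cast_add, hbelow, habove]
  rw [sum_congr rfl hterm, sum_ite, sum_const, sum_const, filter_filter, filter_filter,
    nsmul_eq_mul, nsmul_eq_mul, hbelow, habove, hcard]
  change a * ((a - 1) / (1 + b)) + b * (a / b) ≤ (a + b) * (a / (1 + b))
  have ha : 0 ≤ a := Nat.cast_nonneg _
  obtain hb | hb := (show (0 : ℝ) ≤ b from Nat.cast_nonneg _).eq_or_lt
  · rw [← hb]; simp only [add_zero, div_one, zero_mul]; nlinarith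
  · refine le_of_eq ?_
    field_simp
    ring

theorem measurable_card_filter_le_and {P : ℝ → Prop} [DecidablePred P]
    (hP : MeasurableSet {x | P x}) (r : ℕ) :
    Measurable fun p : ℕ → ℝ => #{l ∈ N | l ≤ r ∧ P (p l)} := by
  simp only [card_filter]
  refine Finset.measurable_sum _ fun l _ => Measurable.ite ?_ measurable_const measurable_const
  by_cases hl : l ≤ r
  · simpa [hl] using (measurable_pi_apply l : Measurable fun p : ℕ → ℝ => p l) hP
  · simp [hl]

theorem measurable_nullCountBelow (r : ℕ) :
    Measurable fun p : ℕ → ℝ => nullCountBelow N p c r :=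
  measurable_card_filter_le_and measurableSet_Iic r

theorem measurable_nullCountAbove (r : ℕ) :
    Measurable fun p : ℕ → ℝ => nullCountAbove N p c r :=
  measurable_card_filter_le_and measurableSet_Ioi r

theorem measurable_nullRatio (r : ℕ) : Measurable (nullRatio N c r) :=
  (Measurable.of_discrete.comp (measurable_nullCountBelow r)).div
    (measurable_const.add (Measurable.of_discrete.comp (measurable_nullCountAbove r)))

theorem integrable_nullRatio_comp {β : Type*} [MeasurableSpace β] {P : Measure β}
    [IsFiniteMeasure P] {q : β → ℕ → ℝ} (hq : Measurable q) (r : ℕ) :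
    Integrable (fun y => nullRatio N c r (q y)) P :=
  .of_bound ((measurable_nullRatio r).comp hq).aestronglyMeasurable #N
    (.of_forall fun _ => by
      rw [Real.norm_of_nonneg (nullRatio_nonneg r)]; exact nullRatio_le_card r)

end NullRatio

theorem setIntegral_le_of_sum_comp_le {β κ : Type*} [MeasurableSpace β] {P : Measure β}
    {S : Finset κ} (hS : S.Nonempty) {T : κ → β → β}
    (hT : ∀ j ∈ S, MeasurePreserving (T j) P P) {A : Set β} (hA : MeasurableSet A)
    (hTA : ∀ j ∈ S, T j ⁻¹' A = A) {f g : β → ℝ} (hf : Integrable f P) (hg : Integrable g P)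
    (hfg : ∀ x, ∑ j ∈ S, f (T j x) ≤ #S * g x) :
    ∫ x in A, f x ∂P ≤ ∫ x in A, g x ∂P := by
  have hfT : ∀ j ∈ S, Integrable (fun x => f (T j x)) P := fun j hj =>
    (hT j hj).integrable_comp_of_integrable hf
  have hinv : ∀ j ∈ S, ∫ x in A, f (T j x) ∂P = ∫ x in A, f x ∂P := by
    intro j hj
    calc ∫ x in A, f (T j x) ∂P = ∫ x in T j ⁻¹' A, f (T j x) ∂P := by rw [hTA j hj]
      _ = ∫ x in A, f x ∂(P.map (T j)) :=
        (setIntegral_map hA (by rw [(hT j hj).map_eq]; exact hf.aestronglyMeasurable)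
          (hT j hj).measurable.aemeasurable).symm
      _ = ∫ x in A, f x ∂P := by rw [(hT j hj).map_eq]
  refine le_of_mul_le_mul_left ?_ (show (0 : ℝ) < #S by exact_mod_cast hS.card_pos)
  calc (#S : ℝ) * ∫ x in A, f x ∂P = ∑ j ∈ S, ∫ x in A, f (T j x) ∂P := by
        rw [sum_congr rfl hinv, sum_const, nsmul_eq_mul]
    _ = ∫ x in A, ∑ j ∈ S, f (T j x) ∂P :=
        (integral_finsetSum S fun j hj => (hfT j hj).integrableOn).symm
    _ ≤ ∫ x in A, #S * g x ∂P :=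
        setIntegral_mono (integrable_finsetSum S hfT).integrableOn
          (hg.const_mul _).integrableOn hfg
    _ = #S * ∫ x in A, g x ∂P := integral_const_mul _ _

theorem condExp_ae_le_of_forall_setIntegral_le {Ω : Type*} {m m₀ : MeasurableSpace Ω}
    {μ : Measure Ω} (hm : m ≤ m₀) [SigmaFinite (μ.trim hm)] {f g : Ω → ℝ}
    (hf : Integrable f μ) (hg : Integrable g μ) (hgm : StronglyMeasurable[m] g)
    (hfg : ∀ s, MeasurableSet[m] s → ∫ ω in s, f ω ∂μ ≤ ∫ ω in s, g ω ∂μ) :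
    μ[f|m] ≤ᵐ[μ] g := by
  refine ae_le_of_ae_le_trim (ae_le_of_forall_setIntegral_le
    (integrable_condExp.trim hm stronglyMeasurable_condExp) (hg.trim hm hgm) fun s hs _ => ?_)
  rw [← setIntegral_trim hm stronglyMeasurable_condExp hs, ← setIntegral_trim hm hgm hs,
    setIntegral_condExp hm hf hs]
  exact hfg s hs

theorem measurePreserving_comp_perm {ι α : Type*} [Fintype ι] [MeasurableSpace α]
    (ν : Measure α) [SigmaFinite ν] (σ : Equiv.Perm ι) :
    MeasurePreserving (fun x : ι → α => x ∘ σ) (.pi fun _ => ν) (.pi fun _ => ν) := by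
  convert measurePreserving_piCongrLeft (fun _ : ι => ν) σ.symm using 1
  funext x i
  simp [MeasurableEquiv.coe_piCongrLeft, Equiv.piCongrLeft_apply_eq_cast]

theorem map_prodMk_eq_pi_prod {Ω ι α E : Type*} [MeasurableSpace Ω] [MeasurableSpace α]
    [MeasurableSpace E] [Fintype ι] {μ : Measure Ω} [IsProbabilityMeasure μ] {ν : Measure α}
    {X : ι → Ω → α} {Z : Ω → E} (hX : ∀ i, Measurable (X i)) (hZ : Measurable Z)
    (hlaw : ∀ i, μ.map (X i) = ν) (hind : iIndepFun X μ)
    (hXZ : IndepFun (fun ω i => X i ω) Z μ) :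
    μ.map (fun ω => (fun i => X i ω, Z ω)) = (Measure.pi fun _ => ν).prod (μ.map Z) := by
  rw [(indepFun_iff_map_prod_eq_prod_map_map (measurable_pi_lambda _ hX).aemeasurable
    hZ.aemeasurable).mp hXZ, (iIndepFun_iff_map_fun_eq_pi_map fun i => (hX i).aemeasurable).mp hind]
  simp_rw [hlaw]

noncomputable def zeroExtend (N : Finset ℕ) (x : N → ℝ) : ℕ → ℝ :=
  fun j => if h : j ∈ N then x ⟨j, h⟩ else 0

theorem measurable_zeroExtend (N : Finset ℕ) : Measurable (zeroExtend N) :=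
  measurable_pi_lambda _ fun j => by
    by_cases h : j ∈ N <;> simp only [zeroExtend, h, dite_true, dite_false]
    exacts [measurable_pi_apply _, measurable_const]

theorem zeroExtend_comp_swap {N : Finset ℕ} (x : N → ℝ) (i j : N) :
    zeroExtend N (x ∘ Equiv.swap i j) = zeroExtend N x ∘ Equiv.swap i.1 j.1 := by
  funext l
  by_cases hl : l ∈ N
  · lift l to N using hl
    rw [Function.comp_apply, Subtype.val_injective.swap_apply]
    simp [zeroExtend]
  · have hli : l ≠ i := fun h => hl (h ▸ i.2)
    have hlj : l ≠ j := fun h => hl (h ▸ j.2)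
    simp [zeroExtend, hl, Equiv.swap_apply_of_ne_of_ne hli hlj]

theorem zeroExtend_restrict {N : Finset ℕ} (p : ℕ → ℝ) :
    zeroExtend N (fun j => p j) = (N : Set ℕ).indicator p := by
  funext l
  by_cases hl : l ∈ N <;> simp [zeroExtend, hl]

theorem measurePreserving_prodMap_comp_swap {Ω E : Type*} [MeasurableSpace Ω]
    [MeasurableSpace E] {μ : Measure Ω} [IsProbabilityMeasure μ] {ν : Measure ℝ}
    [IsProbabilityMeasure ν] {N : Finset ℕ} {pv : Ω → ℕ → ℝ}
    (hmeas : ∀ j, Measurable fun ω => pv ω j) (hlaw : ∀ j ∈ N, μ.map (fun ω => pv ω j) = ν)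
    (hind : iIndepFun (fun (j : N) ω => pv ω j) μ) {Z : Ω → E} (hZ : Measurable Z)
    (hXZ : IndepFun (fun ω (j : N) => pv ω j) Z μ) {i j : ℕ} (hi : i ∈ N) (hj : j ∈ N) :
    MeasurePreserving (Prod.map (· ∘ Equiv.swap i j) id)
      (μ.map fun ω => ((N : Set ℕ).indicator (pv ω), Z ω))
      (μ.map fun ω => ((N : Set ℕ).indicator (pv ω), Z ω)) := by
  have hext : Measurable (Prod.map (zeroExtend N) (id : E → E)) :=
    (measurable_zeroExtend N).prodMap measurable_id
  have hY : (fun ω => ((N : Set ℕ).indicator (pv ω), Z ω))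
      = Prod.map (zeroExtend N) id ∘ fun ω => (fun l : N => pv ω l, Z ω) := by
    funext ω
    simp [zeroExtend_restrict]
  rw [hY, ← Measure.map_map hext
      ((measurable_pi_lambda (fun ω (l : N) => pv ω l) fun l => hmeas l).prodMk hZ),
    map_prodMk_eq_pi_prod (X := fun (l : N) ω => pv ω l) (fun l => hmeas l) hZ
      (fun l => hlaw l l.2) hind hXZ]
  refine (hext.measurePreserving _).of_semiconj
    ((measurePreserving_comp_perm ν (Equiv.swap ⟨i, hi⟩ ⟨j, hj⟩)).prod (.id _))
    (fun x => ?_) ((measurable_pi_lambda _ fun l => measurable_pi_apply _).prodMap measurable_id)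
  exact Prod.ext (zeroExtend_comp_swap x.1 _ _) rfl

section Filtration

variable {Ω : Type*} {m : ℕ} {N : Finset ℕ} {pv : Ω → ℕ → ℝ} {c : ℝ}

theorem seqFiltration_le [MeasurableSpace Ω] (hpv : Measurable pv) (k : ℕ) :
    seqFiltration m N pv c k ≤ ‹MeasurableSpace Ω› :=
  sup_le
    (measurable_iff_comap_le.mp
      (measurable_pi_lambda _ fun j => (measurable_pi_apply j.1).comp hpv))
    (iSup₂_le fun r _ => measurable_iff_comap_le.mp
      (((measurable_nullCountBelow r).comp hpv).prodMk ((measurable_nullCountAbove r).comp hpv)))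

theorem stronglyMeasurable_nullRatio_seqFiltration (k : ℕ) :
    StronglyMeasurable[seqFiltration m N pv c k] fun ω => nullRatio N c k (pv ω) := by
  have hcounts : Measurable[seqFiltration m N pv c k]
      fun ω => (nullCountBelow N (pv ω) c k, nullCountAbove N (pv ω) c k) :=
    measurable_iff_comap_le.mpr
      (le_sup_of_le_right (le_iSup₂_of_le k (Set.mem_Ici.mpr le_rfl) le_rfl))
  exact (Measurable.of_discrete (f := fun q : ℕ × ℕ => (q.1 : ℝ) / (1 + q.2))).comp
    hcounts |>.stronglyMeasurable

/-- Indexing by `max k r` packs the counts at all levels `k' ≥ k` into one function of `r`. -/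
noncomputable def backwardStat {E : Type*} (N : Finset ℕ) (c : ℝ) (k : ℕ) (y : (ℕ → ℝ) × E) :
    E × (ℕ → ℕ × ℕ) :=
  (y.2, fun r => (nullCountBelow N y.1 c (max k r), nullCountAbove N y.1 c (max k r)))

theorem measurable_backwardStat {E : Type*} [MeasurableSpace E] (k : ℕ) :
    Measurable (backwardStat (E := E) N c k) :=
  measurable_snd.prodMk (measurable_pi_lambda _ fun _ =>
    ((measurable_nullCountBelow _).comp measurable_fst).prodMk
      ((measurable_nullCountAbove _).comp measurable_fst))

theorem backwardStat_comp_swap {E : Type*} {i j k : ℕ} (hi : i ∈ N) (hj : j ∈ N) (hik : i ≤ k)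
    (hjk : j ≤ k) :
    backwardStat (E := E) N c k ∘ Prod.map (· ∘ Equiv.swap i j) id = backwardStat N c k := by
  funext y
  refine Prod.ext rfl (funext fun r => ?_)
  simp only [backwardStat, Function.comp_apply, Prod.map_fst,
    nullCountBelow_comp_swap hi hj (le_max_of_le_left hik) (le_max_of_le_left hjk),
    nullCountAbove_comp_swap hi hj (le_max_of_le_left hik) (le_max_of_le_left hjk)]

theorem seqFiltration_le_comap_backwardStat (k : ℕ) :
    seqFiltration m N pv c k ≤ MeasurableSpace.comap (fun ω => backwardStat N c k
      ((N : Set ℕ).indicator (pv ω), fun j : {j // j ∈ Finset.Icc 1 m ∧ j ∉ N} => pv ω j))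
      inferInstance := by
  refine sup_le (measurable_iff_comap_le.mp (measurable_fst.comp (comap_measurable _)))
    (iSup₂_le fun r hr => ?_)
  have hcounts : (fun ω => (nullCountBelow N (pv ω) c r, nullCountAbove N (pv ω) c r))
      = (fun s : _ × (ℕ → ℕ × ℕ) => s.2 r) ∘ fun ω => backwardStat N c k
        ((N : Set ℕ).indicator (pv ω), fun j : {j // j ∈ Finset.Icc 1 m ∧ j ∉ N} => pv ω j) := by
    funext ω
    simp [backwardStat, max_eq_right (Set.mem_Ici.mp hr), nullCountBelow_indicator,
      nullCountAbove_indicator]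
  rw [hcounts]
  exact measurable_iff_comap_le.mp
    (((measurable_pi_apply r).comp measurable_snd).comp (comap_measurable _))

end Filtration

theorem setIntegral_nullRatio_le_of_mem {Ω : Type*} [MeasurableSpace Ω] {μ : Measure Ω}
    [IsProbabilityMeasure μ] {m : ℕ} {N : Finset ℕ} {pv : Ω → ℕ → ℝ} {c : ℝ} {ν : Measure ℝ}
    [IsProbabilityMeasure ν] (hmeas : ∀ j, Measurable fun ω => pv ω j)
    (hlaw : ∀ j ∈ N, μ.map (fun ω => pv ω j) = ν) (hind : iIndepFun (fun (j : N) ω => pv ω j) μ)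
    (hXZ : IndepFun (fun ω (j : N) => pv ω j)
      (fun ω (j : {j // j ∈ Finset.Icc 1 m ∧ j ∉ N}) => pv ω j) μ)
    {n : ℕ} (hn : n + 1 ∈ N) {s : Set Ω} (hs : MeasurableSet[seqFiltration m N pv c (n + 1)] s) :
    ∫ ω in s, nullRatio N c n (pv ω) ∂μ ≤ ∫ ω in s, nullRatio N c (n + 1) (pv ω) ∂μ := by
  set Z := fun ω (j : {j // j ∈ Finset.Icc 1 m ∧ j ∉ N}) => pv ω j
  set Y := fun ω => ((N : Set ℕ).indicator (pv ω), Z ω)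
  have hZ : Measurable Z := measurable_pi_lambda _ fun j => hmeas j
  have hY : Measurable Y := by
    refine (measurable_pi_lambda _ fun j => ?_).prodMk hZ
    by_cases hj : j ∈ N <;> simp [hj, hmeas j]
  obtain ⟨B, hB, rfl⟩ := seqFiltration_le_comap_backwardStat (n + 1) s hs
  have hA : MeasurableSet (backwardStat N c (n + 1) ⁻¹' B) := measurable_backwardStat _ hB
  have htransfer (r : ℕ) : ∫ ω in Y ⁻¹' (backwardStat N c (n + 1) ⁻¹' B), nullRatio N c r (pv ω) ∂μ
      = ∫ y in backwardStat N c (n + 1) ⁻¹' B, nullRatio N c r y.1 ∂(μ.map Y) := by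
    have hf : Measurable fun y : (ℕ → ℝ) × ({j // j ∈ Finset.Icc 1 m ∧ j ∉ N} → ℝ) =>
        nullRatio N c r y.1 :=
      (measurable_nullRatio r).comp measurable_fst
    rw [setIntegral_map hA hf.aestronglyMeasurable hY.aemeasurable]
    exact setIntegral_congr_fun (hY hA) fun ω _ => (nullRatio_indicator (p := pv ω) r).symm
  refine (htransfer n).trans_le (le_of_le_of_eq ?_ (htransfer (n + 1)).symm)
  have : IsProbabilityMeasure (μ.map Y) := Measure.isProbabilityMeasure_map hY.aemeasurable
  have hS : {j ∈ N | j ≤ n + 1}.Nonempty := ⟨n + 1, mem_filter.mpr ⟨hn, le_rfl⟩⟩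
  refine setIntegral_le_of_sum_comp_le hS
    (fun j hj => measurePreserving_prodMap_comp_swap hmeas hlaw hind hZ hXZ (mem_filter.mp hj).1 hn)
    hA (fun j hj => ?_) (integrable_nullRatio_comp measurable_fst n)
    (integrable_nullRatio_comp measurable_fst (n + 1)) fun y => sum_nullRatio_comp_swap_le y.1 hn
  obtain ⟨hjN, hjn⟩ := mem_filter.mp hj
  rw [← Set.preimage_comp, backwardStat_comp_swap hjN hn hjn le_rfl]

theorem null_ratio_backward_supermartingale_general (m : ℕ)
    {Ω : Type*} [MeasurableSpace Ω] (μ : Measure Ω) [IsProbabilityMeasure μ]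
    (pv : Ω → ℕ → ℝ) (hmeas : ∀ j, Measurable fun ω => pv ω j)
    (N : Finset ℕ)
    (ν : Measure ℝ) [IsProbabilityMeasure ν]
    (hlaw : ∀ j ∈ N, Measure.map (fun ω => pv ω j) μ = ν)
    (hnullindep : iIndepFun (m := fun _ : {j // j ∈ N} => (inferInstance : MeasurableSpace ℝ))
      (fun j ω => pv ω j.1) μ)
    (hblockindep : IndepFun (fun ω (j : {j // j ∈ N}) => pv ω j.1)
      (fun ω (j : {j : ℕ // j ∈ Finset.Icc 1 m ∧ j ∉ N}) => pv ω j.1) μ)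
    (c : ℝ)
    (M : ℕ → Ω → ℝ)
    (hM : ∀ k ω, M k ω
      = (nullCountBelow N (pv ω) c k : ℝ) / (1 + (nullCountAbove N (pv ω) c k : ℝ))) :
    ∀ k : ℕ, 1 ≤ k → k ≤ m →
      ∀ᵐ ω ∂μ, (μ[M (k - 1)|seqFiltration m N pv c k]) ω ≤ M k ω := by
  intro k hk _
  obtain ⟨n, rfl⟩ : ∃ n, k = n + 1 := ⟨k - 1, by omega⟩
  obtain rfl : M = fun r ω => nullRatio N c r (pv ω) := funext₂ hM
  have hpv : Measurable pv := measurable_pi_lambda _ hmeas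
  have hF := seqFiltration_le (m := m) (N := N) (c := c) hpv (n + 1)
  rw [Nat.add_sub_cancel]
  by_cases hn : n + 1 ∈ N
  · exact condExp_ae_le_of_forall_setIntegral_le hF (integrable_nullRatio_comp hpv n)
      (integrable_nullRatio_comp hpv (n + 1)) (stronglyMeasurable_nullRatio_seqFiltration _)
      fun s hs => setIntegral_nullRatio_le_of_mem hmeas hlaw hnullindep hblockindep hn hs
  · simp only [← nullRatio_succ_of_notMem (c := c) (p := pv _) hn]
    rw [condExp_of_stronglyMeasurable hF (stronglyMeasurable_nullRatio_seqFiltration _)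
      (integrable_nullRatio_comp hpv (n + 1))]
    exact .of_forall fun _ => le_rfl

/-- **Backward super-martingale property** (Lemma 4): with
`M(k) = V⁺(k) / (1 + V⁻(k))`, for every `k ∈ {1,…,m}` we have
`E[ M(k−1) | 𝓕_k ] ≤ M(k)` almost surely, i.e. `M` is a super-martingale with
respect to the backward filtration `(𝓕_k)`.  Here the null p-values are i.i.d.,
each stochastically dominating the uniform distribution, and are independent of
the non-null p-values. -/
theorem null_ratio_backward_supermartingale (m : ℕ)
    {Ω : Type*} [MeasurableSpace Ω] (μ : Measure Ω) [IsProbabilityMeasure μ]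
    (pv : Ω → ℕ → ℝ) (hmeas : ∀ j, Measurable fun ω => pv ω j)
    (hrange : ∀ ω, ∀ j ∈ Finset.Icc 1 m, pv ω j ∈ Set.Icc (0 : ℝ) 1)
    (N : Finset ℕ) (hN : N ⊆ Finset.Icc 1 m)
    (ν : Measure ℝ) [IsProbabilityMeasure ν]
    (hlaw : ∀ j ∈ N, Measure.map (fun ω => pv ω j) μ = ν)
    (hdom : ∀ u : ℝ, 0 ≤ u → u ≤ 1 → ν {x | x ≤ u} ≤ ENNReal.ofReal u)
    (hnullindep : iIndepFun (m := fun _ : {j // j ∈ N} => (inferInstance : MeasurableSpace ℝ))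
      (fun j ω => pv ω j.1) μ)
    (hblockindep : IndepFun (fun ω (j : {j // j ∈ N}) => pv ω j.1)
      (fun ω (j : {j : ℕ // j ∈ Finset.Icc 1 m ∧ j ∉ N}) => pv ω j.1) μ)
    (c : ℝ) (hc0 : 0 < c) (hc1 : c < 1)
    (M : ℕ → Ω → ℝ)
    (hM : ∀ k ω, M k ω
      = (nullCountBelow N (pv ω) c k : ℝ) / (1 + (nullCountAbove N (pv ω) c k : ℝ))) :
    ∀ k : ℕ, 1 ≤ k → k ≤ m →
      ∀ᵐ ω ∂μ, (μ[M (k - 1)|seqFiltration m N pv c k]) ω ≤ M k ω :=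
  null_ratio_backward_supermartingale_general m μ pv hmeas N ν hlaw hnullindep hblockindep c M hM
end

section
/- Binomial ratio bound: if Y ~ Binomial(N, c) with N ∈ ℕ and c ∈ (0,1), then E[ Y / (1 + N − Y) ] ≤ c/(1−c). -/
/-!
Shifting the summation index by one, the term of index `i + 1` equals `c / (1 - c)` times the
binomial weight of index `i`, because `C(N, i + 1) (i + 1) = C(N, i) (N - i)` and the
denominator `1 + N - (i + 1)` is exactly `N - i`. The left-hand side is therefore `c / (1 - c)`
times the binomial mass of `{0, …, N - 1}`, which is at most `1`.
-/

open Finset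

noncomputable section

def binomialWeight (N : ℕ) (c : ℝ) (i : ℕ) : ℝ :=
  N.choose i * c ^ i * (1 - c) ^ (N - i)

lemma sum_binomialWeight (N : ℕ) (c : ℝ) :
    ∑ i ∈ range (N + 1), binomialWeight N c i = 1 := by
  have h := add_pow c (1 - c) N
  rw [add_sub_cancel, one_pow] at h
  exact (sum_congr rfl fun i _ => by rw [binomialWeight]; ring).trans h.symm

lemma binomialWeight_nonneg (N : ℕ) {c : ℝ} (hc0 : 0 ≤ c) (hc1 : c ≤ 1) (i : ℕ) :
    0 ≤ binomialWeight N c i := by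
  have : 0 ≤ 1 - c := sub_nonneg.mpr hc1
  unfold binomialWeight
  positivity

lemma sum_range_binomialWeight_le_one (N : ℕ) {c : ℝ} (hc0 : 0 ≤ c) (hc1 : c ≤ 1) :
    ∑ i ∈ range N, binomialWeight N c i ≤ 1 := by
  rw [← sum_binomialWeight N c, sum_range_succ]
  exact le_add_of_nonneg_right (binomialWeight_nonneg N hc0 hc1 N)

lemma binomialWeight_succ_mul_ratio (N : ℕ) {c : ℝ} (hc : c ≠ 1) {i : ℕ} (hi : i < N) :
    binomialWeight N c (i + 1) * (((i + 1 : ℕ) : ℝ) / (1 + N - (i + 1 : ℕ)))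
      = c / (1 - c) * binomialWeight N c i := by
  have hchoose : (N.choose (i + 1) : ℝ) * (i + 1) = N.choose i * (N - i) := by
    have := congrArg (Nat.cast : ℕ → ℝ) (Nat.choose_succ_right_eq N i)
    push_cast [Nat.cast_sub hi.le] at this
    exact this
  have hpow : (1 - c) ^ (N - i) = (1 - c) ^ (N - (i + 1)) * (1 - c) := by
    rw [← pow_succ, Nat.sub_add_eq, Nat.sub_add_cancel (Nat.sub_pos_of_lt hi)]
  have hden : 1 + (N : ℝ) - (i + 1 : ℕ) = N - i := by push_cast; ring
  have hNi : (N : ℝ) - i ≠ 0 := sub_ne_zero.mpr (by exact_mod_cast hi.ne')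
  have h1c : 1 - c ≠ 0 := sub_ne_zero.mpr hc.symm
  rw [hden, binomialWeight, binomialWeight, hpow]
  push_cast
  field_simp
  linear_combination c ^ (i + 1) * hchoose

end

/-- **Binomial ratio bound**: if `Y ~ Binomial(N, c)` with `c ∈ (0,1)`, then
`E[ Y / (1 + N - Y) ] ≤ c / (1 - c)`.  The expectation is written out explicitly
as a sum over the binomial distribution. -/
theorem binomial_ratio_bound (N : ℕ) (c : ℝ) (hc0 : 0 < c) (hc1 : c < 1) :
    ∑ i ∈ Finset.range (N + 1),
        (N.choose i : ℝ) * c ^ i * (1 - c) ^ (N - i) * ((i : ℝ) / (1 + (N : ℝ) - (i : ℝ)))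
      ≤ c / (1 - c) := by
  have hshift : ∑ i ∈ range (N + 1),
        binomialWeight N c i * ((i : ℝ) / (1 + (N : ℝ) - (i : ℝ)))
      = c / (1 - c) * ∑ i ∈ range N, binomialWeight N c i := by
    rw [sum_range_succ', mul_sum]
    simp only [Nat.cast_zero, zero_div, mul_zero, add_zero]
    exact sum_congr rfl fun i hi => binomialWeight_succ_mul_ratio N hc1.ne (mem_range.mp hi)
  calc _ = c / (1 - c) * ∑ i ∈ range N, binomialWeight N c i := hshift
    _ ≤ c / (1 - c) * 1 := by
      gcongr
      exact sum_range_binomialWeight_le_one N hc0.le hc1.le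
    _ = c / (1 - c) := mul_one _
end

section
/- Positive semidefiniteness of the knockoff Gram matrix: let Σ ∈ ℝ^{p×p} be a symmetric positive definite matrix and s ∈ ℝ^p. Then the 2p×2p block matrix G = [[Σ, Σ − diag{s}], [Σ − diag{s}, Σ]] is positive semidefinite if and only if s_j ≥ 0 for all j and 2Σ − diag{s} is positive semidefinite; equivalently, G is positive semidefinite if and only if the Schur complement A = 2·diag{s} − diag{s}·Σ⁻¹·diag{s} is positive semidefinite. -/
/-!
Conjugating `G` by the involution-up-to-scale `P = [[1, 1], [1, -1]]` (so `P * P = 2`) gives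
`P G P = 2 • [[2Σ - D, 0], [0, D]]` with `D = diag s`, which yields the first equivalence.
The second is the Schur complement criterion for the positive definite block `Σ`: the complement
`Σ - (Σ - D) Σ⁻¹ (Σ - D)` expands to `2D - D Σ⁻¹ D`.
-/

open Matrix

namespace Matrix

open scoped ComplexOrder

variable {m n 𝕜 : Type*} [RCLike 𝕜]

theorem posSemidef_smul_iff {M : Matrix n n 𝕜} {c : 𝕜} (hc : 0 < c) :
    (c • M).PosSemidef ↔ M.PosSemidef :=
  ⟨fun h => by simpa [smul_smul, hc.ne'] using h.smul (inv_nonneg.2 hc.le),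
    fun h => h.smul hc.le⟩

variable [Fintype m] [Fintype n]

theorem posSemidef_fromBlocks_zero_iff {A : Matrix m m 𝕜} {D : Matrix n n 𝕜} :
    (fromBlocks A 0 0 D).PosSemidef ↔ A.PosSemidef ∧ D.PosSemidef := by
  refine ⟨fun h => ⟨h.submatrix Sum.inl, h.submatrix Sum.inr⟩,
    fun ⟨hA, hD⟩ => .of_dotProduct_mulVec_nonneg ?_ fun x => ?_⟩
  · exact isHermitian_fromBlocks_iff.2 ⟨hA.1, by simp, by simp, hD.1⟩
  · rw [← Sum.elim_comp_inl_inr x, fromBlocks_mulVec, Function.star_sumElim,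
      sumElim_dotProduct_sumElim]
    simpa using add_nonneg (hA.dotProduct_mulVec_nonneg (x ∘ Sum.inl))
      (hD.dotProduct_mulVec_nonneg (x ∘ Sum.inr))

variable [DecidableEq n]

theorem fromBlocks_one_one_one_neg_conj_fromBlocks_self (A B : Matrix n n 𝕜) :
    fromBlocks 1 1 1 (-1) * fromBlocks A B B A * fromBlocks 1 1 1 (-1) =
      (2 : 𝕜) • fromBlocks (A + B) 0 0 (A - B) := by
  simp only [fromBlocks_multiply, fromBlocks_smul, Matrix.one_mul, Matrix.mul_one,
    Matrix.neg_mul, Matrix.mul_neg, smul_zero]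
  congr 1 <;> module

theorem posSemidef_fromBlocks_self_iff {A B : Matrix n n 𝕜} :
    (fromBlocks A B B A).PosSemidef ↔ (A + B).PosSemidef ∧ (A - B).PosSemidef := by
  set P : Matrix (n ⊕ n) (n ⊕ n) 𝕜 := fromBlocks 1 1 1 (-1)
  have hP : star P = P := by simp [P, star_eq_conjTranspose, fromBlocks_conjTranspose]
  have hPP : P * P = (2 : 𝕜) • 1 := by
    simpa [hP] using fromBlocks_one_one_one_neg_conj_fromBlocks_self (1 : Matrix n n 𝕜) 0
  have hPunit : IsUnit P := (isUnit_iff_isUnit_det P).2 <|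
    isUnit_det_of_right_inverse (B := (2 : 𝕜)⁻¹ • P)
      (by rw [Matrix.mul_smul, hPP, smul_smul, inv_mul_cancel₀ two_ne_zero, one_smul])
  rw [← hPunit.posSemidef_star_right_conjugate_iff, hP,
    fromBlocks_one_one_one_neg_conj_fromBlocks_self, posSemidef_smul_iff two_pos,
    posSemidef_fromBlocks_zero_iff]

theorem sub_sub_mul_nonsing_inv_mul_sub {R : Type*} [CommRing R] {A : Matrix n n R}
    (hA : IsUnit A.det) (D : Matrix n n R) :
    A - (A - D) * A⁻¹ * (A - D) = (2 : R) • D - D * A⁻¹ * D := by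
  simp only [Matrix.sub_mul, Matrix.mul_sub, mul_nonsing_inv A hA, Matrix.one_mul,
    nonsing_inv_mul_cancel_right (h := hA)]
  module

end Matrix

/-- **Positive semidefiniteness of the knockoff Gram matrix**: let `Σ ∈ ℝ^{p×p}` be
symmetric positive definite and `s ∈ ℝ^p`.  Then the `2p × 2p` block matrix
`G = [[Σ, Σ − diag{s}], [Σ − diag{s}, Σ]]` is positive semidefinite if and only if
`s_j ≥ 0` for all `j` and `2Σ − diag{s}` is positive semidefinite; equivalently,
`G` is positive semidefinite if and only if the Schur complement
`A = 2 diag{s} − diag{s} Σ⁻¹ diag{s}` is positive semidefinite. -/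
theorem knockoff_gram_posSemidef_iff {p : ℕ}
    (Sgm : Matrix (Fin p) (Fin p) ℝ) (hSgm : Sgm.PosDef) (s : Fin p → ℝ)
    (G : Matrix (Fin p ⊕ Fin p) (Fin p ⊕ Fin p) ℝ)
    (hG : G = Matrix.fromBlocks Sgm (Sgm - Matrix.diagonal s)
        (Sgm - Matrix.diagonal s) Sgm) :
    (G.PosSemidef ↔ (∀ j, 0 ≤ s j) ∧ ((2 : ℝ) • Sgm - Matrix.diagonal s).PosSemidef)
      ∧
    (G.PosSemidef ↔
      ((2 : ℝ) • Matrix.diagonal s - Matrix.diagonal s * Sgm⁻¹ * Matrix.diagonal s).PosSemidef) := by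
  subst hG
  constructor
  · rw [posSemidef_fromBlocks_self_iff, sub_sub_cancel, posSemidef_diagonal_iff, and_comm,
      show Sgm + (Sgm - diagonal s) = (2 : ℝ) • Sgm - diagonal s by module]
  · have hB : (Sgm - diagonal s)ᴴ = Sgm - diagonal s := by
      rw [conjTranspose_sub, hSgm.isHermitian.eq, diagonal_conjTranspose, star_trivial]
    have : Invertible Sgm := hSgm.isUnit.invertible
    have hSchur := hSgm.fromBlocks₁₁ (Sgm - diagonal s) Sgm
    rw [hB] at hSchur
    rw [hSchur, sub_sub_mul_nonsing_inv_mul_sub ((isUnit_iff_isUnit_det Sgm).1 hSgm.isUnit)]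
end

section
/- Validity of the knockoff construction: let X ∈ ℝ^{n×p} with n ≥ 2p have invertible Gram matrix Σ = XᵀX, let s ∈ ℝ^p satisfy s_j ≥ 0 for all j and diag{s} ⪯ 2Σ, let Ũ ∈ ℝ^{n×p} have orthonormal columns orthogonal to the column span of X (ŨᵀŨ = I_p and ŨᵀX = 0), and let C ∈ ℝ^{p×p} satisfy CᵀC = 2·diag{s} − diag{s}·Σ⁻¹·diag{s}. Then the matrix X̃ = X(I − Σ⁻¹·diag{s}) + ŨC satisfies X̃ᵀX̃ = Σ and XᵀX̃ = Σ − diag{s}. -/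
open Matrix

/-- **Validity of the knockoff construction**: let `X ∈ ℝ^{n×p}` with `n ≥ 2p` have
invertible Gram matrix `Σ = XᵀX`, let `s ∈ ℝ^p` satisfy `s_j ≥ 0` and `diag{s} ⪯ 2Σ`,
let `Ũ ∈ ℝ^{n×p}` have orthonormal columns orthogonal to the column span of `X`
(`ŨᵀŨ = I_p`, `ŨᵀX = 0`), and let `C ∈ ℝ^{p×p}` satisfy
`CᵀC = 2·diag{s} − diag{s}·Sg⁻¹·diag{s}`.  Then
`X̃ = X(I − Sg⁻¹ diag{s}) + ŨC` satisfies `X̃ᵀX̃ = Σ` and `XᵀX̃ = Σ − diag{s}`. -/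
theorem knockoff_construction_valid {n p : ℕ} (hn : 2 * p ≤ n)
    (X : Matrix (Fin n) (Fin p) ℝ) (s : Fin p → ℝ)
    (hSgminv : IsUnit (Xᵀ * X).det)
    (hs : ∀ j, 0 ≤ s j)
    (hs2 : ((2 : ℝ) • (Xᵀ * X) - Matrix.diagonal s).PosSemidef)
    (U : Matrix (Fin n) (Fin p) ℝ)
    (hU1 : Uᵀ * U = 1)
    (hU2 : Uᵀ * X = 0)
    (C : Matrix (Fin p) (Fin p) ℝ)
    (hC : Cᵀ * C =
      (2 : ℝ) • Matrix.diagonal s - Matrix.diagonal s * (Xᵀ * X)⁻¹ * Matrix.diagonal s)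
    (Xt : Matrix (Fin n) (Fin p) ℝ)
    (hXt : Xt = X * (1 - (Xᵀ * X)⁻¹ * Matrix.diagonal s) + U * C) :
    Xtᵀ * Xt = Xᵀ * X ∧ Xᵀ * Xt = Xᵀ * X - Matrix.diagonal s := by
  subst hXt
  set Sg := Xᵀ * X with hSg
  set D := Matrix.diagonal s with hD
  have hXU : Xᵀ * U = 0 := by
    have := congrArg Matrix.transpose hU2
    simpa [Matrix.transpose_mul] using this
  have hinv : Sg * Sg⁻¹ = 1 := Matrix.mul_nonsing_inv _ hSgminv
  have hinv' : Sg⁻¹ * Sg = 1 := Matrix.nonsing_inv_mul _ hSgminv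
  have hsymm : Sgᵀ = Sg := by rw [hSg]; simp [Matrix.transpose_mul]
  have hinvsymm : (Sg⁻¹)ᵀ = Sg⁻¹ := by
    rw [Matrix.transpose_nonsing_inv, hsymm]
  have key2 : Xᵀ * (X * (1 - Sg⁻¹ * D) + U * C) = Sg - D := by
    rw [Matrix.mul_add, ← Matrix.mul_assoc, ← Matrix.mul_assoc, hXU, Matrix.zero_mul,
      add_zero, ← hSg, Matrix.mul_sub, Matrix.mul_one, ← Matrix.mul_assoc, hinv,
      Matrix.one_mul]
  refine ⟨?_, key2⟩
  rw [Matrix.transpose_add, Matrix.transpose_mul, Matrix.transpose_mul,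
    Matrix.add_mul, Matrix.mul_assoc, Matrix.mul_assoc, key2,
    Matrix.mul_add, ← Matrix.mul_assoc Uᵀ, ← Matrix.mul_assoc Uᵀ, hU2, hU1,
    Matrix.zero_mul, zero_add, Matrix.one_mul, hC]
  rw [Matrix.transpose_sub, Matrix.transpose_one, Matrix.transpose_mul,
    Matrix.diagonal_transpose, hinvsymm, Matrix.sub_mul, Matrix.one_mul,
    Matrix.mul_sub, Matrix.mul_assoc D Sg⁻¹ Sg, hinv', Matrix.mul_one]
  module
end

section
/- Reduction of the SDP for knockoff construction: let Σ ∈ ℝ^{p×p} be symmetric positive semidefinite. If s ∈ ℝ^p is feasible for the problem minimize Σ_j |1 − s_j| subject to s_j ≥ 0 and diag{s} ⪯ 2Σ, then the truncated vector s′ with s′_j = min(s_j, 1) is also feasible and satisfies Σ_j |1 − s′_j| ≤ Σ_j |1 − s_j|; consequently there is an optimal solution with s_j ≤ 1 for all j, and the problem has the same optimal value as the SDP: minimize Σ_j (1 − s_j) subject to 0 ≤ s_j ≤ 1 and diag{s} ⪯ 2Σ. -/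
open Matrix

/-- Feasibility for the knockoff SDP: `s_j ≥ 0` for all `j` and `diag{s} ⪯ 2Σ`. -/
def KnockoffSDPFeasible {p : ℕ} (Sgm : Matrix (Fin p) (Fin p) ℝ) (s : Fin p → ℝ) : Prop :=
  (∀ j, 0 ≤ s j) ∧ ((2 : ℝ) • Sgm - Matrix.diagonal s).PosSemidef

theorem Matrix.isClosed_setOf_posSemidef {n R : Type*} [Fintype n] [Ring R] [PartialOrder R]
    [StarRing R] [TopologicalSpace R] [IsTopologicalRing R] [ContinuousStar R]
    [OrderClosedTopology R] :
    IsClosed {M : Matrix n n R | M.PosSemidef} := by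
  have hset : {M : Matrix n n R | M.PosSemidef} =
      {M | Mᴴ = M} ∩ ⋂ x : n → R, {M | 0 ≤ star x ⬝ᵥ (M *ᵥ x)} :=
    Set.ext fun _ => by simp [posSemidef_iff_dotProduct_mulVec, IsHermitian]
  rw [hset]
  exact (isClosed_eq continuous_id.matrix_conjTranspose continuous_id).inter <|
    isClosed_iInter fun x => isClosed_le continuous_const <|
      continuous_const.dotProduct (continuous_id.matrix_mulVec continuous_const)

theorem sum_abs_one_sub_min_one_le {ι : Type*} (S : Finset ι) (s : ι → ℝ) :
    ∑ j ∈ S, |1 - min (s j) 1| ≤ ∑ j ∈ S, |1 - s j| := by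
  refine Finset.sum_le_sum fun j _ => ?_
  rcases le_total (s j) 1 with h | h
  · rw [min_eq_left h]
  · rw [min_eq_right h, sub_self, abs_zero]
    exact abs_nonneg _

theorem sum_abs_one_sub_eq_of_le_one {ι : Type*} (S : Finset ι) {t : ι → ℝ}
    (ht : ∀ j, t j ≤ 1) : ∑ j ∈ S, |1 - t j| = ∑ j ∈ S, (1 - t j) :=
  Finset.sum_congr rfl fun j _ => abs_of_nonneg (sub_nonneg.2 (ht j))

namespace KnockoffSDPFeasible

variable {p : ℕ} {Sgm : Matrix (Fin p) (Fin p) ℝ}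

theorem isClosed_setOf :
    IsClosed {t | KnockoffSDPFeasible Sgm t} :=
  show IsClosed (Set.Ici 0 ∩ (fun t => (2 : ℝ) • Sgm - diagonal t) ⁻¹' _) from
  isClosed_Ici.inter <|
    isClosed_setOf_posSemidef.preimage <|
      continuous_const.sub continuous_id.matrix_diagonal

/-- Lowering the diagonal only adds a nonnegative diagonal matrix to `2Σ - diag{s}`. -/
theorem of_le {s t : Fin p → ℝ} (hs : KnockoffSDPFeasible Sgm s) (ht : 0 ≤ t) (hts : t ≤ s) :
    KnockoffSDPFeasible Sgm t := by
  refine ⟨ht, ?_⟩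
  have hsplit : (2 : ℝ) • Sgm - diagonal t = ((2 : ℝ) • Sgm - diagonal s) + diagonal (s - t) := by
    rw [show s - t = fun i => s i - t i from rfl, ← diagonal_sub]; abel
  rw [hsplit]
  exact hs.2.add (PosSemidef.diagonal (sub_nonneg.2 hts))

theorem min_one {s : Fin p → ℝ} (hs : KnockoffSDPFeasible Sgm s) :
    KnockoffSDPFeasible Sgm fun j => min (s j) 1 :=
  hs.of_le (fun j => le_min (hs.1 j) zero_le_one) fun _ => min_le_left _ _

/-- The minimum is attained on the compact set of feasible points in `[0, 1]^p`, and truncation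
shows that it is a minimum over all feasible points. -/
theorem exists_le_one_forall_le {s : Fin p → ℝ} (hs : KnockoffSDPFeasible Sgm s) :
    ∃ m : Fin p → ℝ, KnockoffSDPFeasible Sgm m ∧ (∀ j, m j ≤ 1) ∧
      ∀ t : Fin p → ℝ, KnockoffSDPFeasible Sgm t → ∑ j, |1 - m j| ≤ ∑ j, |1 - t j| := by
  have hK : IsCompact ({t | KnockoffSDPFeasible Sgm t} ∩ Set.Icc 0 1) :=
    isCompact_Icc.inter_left isClosed_setOf
  have hobj : Continuous fun t : Fin p → ℝ => ∑ j, |1 - t j| := by fun_prop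
  obtain ⟨m, ⟨hm, -, hm1⟩, hmin⟩ := hK.exists_isMinOn
    ⟨_, hs.min_one, hs.min_one.1, fun j => min_le_right _ _⟩ hobj.continuousOn
  refine ⟨m, hm, hm1, fun t ht => ?_⟩
  calc ∑ j, |1 - m j| ≤ ∑ j, |1 - min (t j) 1| :=
        hmin ⟨ht.min_one, ht.min_one.1, fun j => min_le_right _ _⟩
    _ ≤ ∑ j, |1 - t j| := sum_abs_one_sub_min_one_le _ t

end KnockoffSDPFeasible

theorem knockoff_sdp_reduction_general {p : ℕ}
    (Sgm : Matrix (Fin p) (Fin p) ℝ)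
    (s : Fin p → ℝ) (hs : KnockoffSDPFeasible Sgm s)
    (s' : Fin p → ℝ) (hs' : s' = fun j => min (s j) 1) :
    KnockoffSDPFeasible Sgm s' ∧
    (∑ j, |1 - s' j|) ≤ ∑ j, |1 - s j| ∧
    (∃ sOpt : Fin p → ℝ, KnockoffSDPFeasible Sgm sOpt ∧ (∀ j, sOpt j ≤ 1) ∧
      ∀ t : Fin p → ℝ, KnockoffSDPFeasible Sgm t →
        (∑ j, |1 - sOpt j|) ≤ ∑ j, |1 - t j|) ∧
    sInf {v : ℝ | ∃ t : Fin p → ℝ, KnockoffSDPFeasible Sgm t ∧ v = ∑ j, |1 - t j|}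
      = sInf {v : ℝ | ∃ t : Fin p → ℝ,
          ((∀ j, 0 ≤ t j ∧ t j ≤ 1) ∧ ((2 : ℝ) • Sgm - Matrix.diagonal t).PosSemidef) ∧
          v = ∑ j, (1 - t j)} := by
  subst hs'
  obtain ⟨m, hm, hm1, hmin⟩ := hs.exists_le_one_forall_le
  refine ⟨hs.min_one, sum_abs_one_sub_min_one_le _ s, ⟨m, hm, hm1, hmin⟩, ?_⟩
  have hleastA : IsLeast {v : ℝ | ∃ t : Fin p → ℝ, KnockoffSDPFeasible Sgm t ∧
      v = ∑ j, |1 - t j|} (∑ j, |1 - m j|) :=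
    ⟨⟨m, hm, rfl⟩, by rintro _ ⟨t, ht, rfl⟩; exact hmin t ht⟩
  have hleastB : IsLeast {v : ℝ | ∃ t : Fin p → ℝ,
      ((∀ j, 0 ≤ t j ∧ t j ≤ 1) ∧ ((2 : ℝ) • Sgm - Matrix.diagonal t).PosSemidef) ∧
      v = ∑ j, (1 - t j)} (∑ j, |1 - m j|) := by
    refine ⟨⟨m, ⟨fun j => ⟨hm.1 j, hm1 j⟩, hm.2⟩, sum_abs_one_sub_eq_of_le_one _ hm1⟩, ?_⟩
    rintro _ ⟨t, ⟨ht, htPSD⟩, rfl⟩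
    rw [← sum_abs_one_sub_eq_of_le_one _ fun j => (ht j).2]
    exact hmin t ⟨fun j => (ht j).1, htPSD⟩
  rw [hleastA.csInf_eq, hleastB.csInf_eq]

/-- **Reduction of the SDP for knockoff construction**: let `Σ` be symmetric positive
semidefinite.  If `s` is feasible for "minimize `∑_j |1 − s_j|` subject to `s_j ≥ 0`,
`diag{s} ⪯ 2Σ`", then the truncation `s′_j = min(s_j, 1)` is feasible with
`∑_j |1 − s′_j| ≤ ∑_j |1 − s_j|`; consequently there is an optimal solution with
`s_j ≤ 1` for all `j`, and the problem has the same optimal value as the SDP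
"minimize `∑_j (1 − s_j)` subject to `0 ≤ s_j ≤ 1`, `diag{s} ⪯ 2Σ`". -/
theorem knockoff_sdp_reduction {p : ℕ}
    (Sgm : Matrix (Fin p) (Fin p) ℝ) (hSgm : Sgm.PosSemidef)
    (s : Fin p → ℝ) (hs : KnockoffSDPFeasible Sgm s)
    (s' : Fin p → ℝ) (hs' : s' = fun j => min (s j) 1) :
    KnockoffSDPFeasible Sgm s' ∧
    (∑ j, |1 - s' j|) ≤ ∑ j, |1 - s j| ∧
    (∃ sOpt : Fin p → ℝ, KnockoffSDPFeasible Sgm sOpt ∧ (∀ j, sOpt j ≤ 1) ∧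
      ∀ t : Fin p → ℝ, KnockoffSDPFeasible Sgm t →
        (∑ j, |1 - sOpt j|) ≤ ∑ j, |1 - t j|) ∧
    sInf {v : ℝ | ∃ t : Fin p → ℝ, KnockoffSDPFeasible Sgm t ∧ v = ∑ j, |1 - t j|}
      = sInf {v : ℝ | ∃ t : Fin p → ℝ,
          ((∀ j, 0 ≤ t j ∧ t j ≤ 1) ∧ ((2 : ℝ) • Sgm - Matrix.diagonal t).PosSemidef) ∧
          v = ∑ j, (1 - t j)} :=
  knockoff_sdp_reduction_general Sgm s hs s' hs'
end

section
/- Equivalence of the knockoff threshold with the sequential procedure: let W ∈ ℝ^m satisfy |W_1| ≥ |W_2| ≥ … ≥ |W_m| > 0, define 1-bit p-values p_j = 1/2 if W_j > 0 and p_j = 1 if W_j < 0, and let K = { k ∈ {1,…,m−1} : |W_k| > |W_{k+1}| } ∪ {m}. Then for every k ∈ K and a ∈ {0,1}: (a + #{j ≤ k : p_j > 1/2}) / max(#{j ≤ k : p_j ≤ 1/2}, 1) = (a + #{j : W_j ≤ −|W_k|}) / max(#{j : W_j ≥ |W_k|}, 1). -/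
/-- Monotonicity of |W| on [1,m] from adjacent comparisons. -/
lemma abs_W_anti (m : ℕ) (W : ℕ → ℝ)
    (hord : ∀ j, 1 ≤ j → j < m → |W (j + 1)| ≤ |W j|) :
    ∀ i j, 1 ≤ i → i ≤ j → j ≤ m → |W j| ≤ |W i| := by
  intro i j hi hij hjm
  induction j with
  | zero => omega
  | succ n ih =>
    rcases Nat.lt_or_ge i (n+1) with h | h
    · have hn : i ≤ n := by omega
      have h1 : |W (n+1)| ≤ |W n| := hord n (by omega) (by omega)
      exact le_trans h1 (ih hn (by omega))
    · have : i = n + 1 := by omega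
      subst this; exact le_refl _

/-- **Equivalence of the knockoff threshold with the sequential procedure**: let
`W_1, …, W_m` be nonzero statistics with `|W_1| ≥ |W_2| ≥ … ≥ |W_m| > 0`, define the
1-bit p-values `p_j = 1/2` if `W_j > 0` and `p_j = 1` if `W_j < 0`, and let
`K = { k ∈ {1,…,m−1} : |W_k| > |W_{k+1}| } ∪ {m}`.  Then for every `k ∈ K` and
`a ∈ {0,1}`:
`(a + #{j ≤ k : p_j > 1/2}) / max(#{j ≤ k : p_j ≤ 1/2}, 1)
  = (a + #{j : W_j ≤ −|W_k|}) / max(#{j : W_j ≥ |W_k|}, 1)`.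

The statistics are indexed by `j ∈ {1,…,m}` (so `W j` for `j ∈ Finset.Icc 1 m`). -/
theorem knockoff_threshold_eq_sequential (m : ℕ) (W : ℕ → ℝ)
    (hne : ∀ j ∈ Finset.Icc 1 m, W j ≠ 0)
    (hord : ∀ j, 1 ≤ j → j < m → |W (j + 1)| ≤ |W j|)
    (pv : ℕ → ℝ) (hpv : ∀ j, pv j = if 0 < W j then (1 / 2 : ℝ) else 1)
    (K : Finset ℕ)
    (hK : K = (Finset.Icc 1 m).filter (fun k => k = m ∨ |W (k + 1)| < |W k|))
    (k : ℕ) (hk : k ∈ K) (a : ℕ) (ha : a ≤ 1) :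
    ((a : ℝ) + ((Finset.Icc 1 k).filter (fun j => (1 / 2 : ℝ) < pv j)).card) /
        max (((Finset.Icc 1 k).filter (fun j => pv j ≤ (1 / 2 : ℝ))).card : ℝ) 1
      = ((a : ℝ) + ((Finset.Icc 1 m).filter (fun j => W j ≤ -|W k|)).card) /
        max (((Finset.Icc 1 m).filter (fun j => |W k| ≤ W j)).card : ℝ) 1 := by
  subst hK
  rw [Finset.mem_filter, Finset.mem_Icc] at hk
  obtain ⟨⟨hk1, hkm⟩, hkalt⟩ := hk
  have habs := abs_W_anti m W hord
  have hWk : W k ≠ 0 := hne k (Finset.mem_Icc.mpr ⟨hk1, hkm⟩)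
  have hWkpos : 0 < |W k| := abs_pos.mpr hWk
  -- j ≤ k for indices with |W j| ≥ |W k|
  have hle : ∀ j, 1 ≤ j → j ≤ m → |W k| ≤ |W j| → j ≤ k := by
    intro j hj1 hjm hwj
    by_contra h
    push_neg at h
    rcases hkalt with rfl | hlt
    · omega
    · have : |W j| ≤ |W (k+1)| := habs (k+1) j (by omega) (by omega) hjm
      linarith
  have hset1 : (Finset.Icc 1 k).filter (fun j => (1 / 2 : ℝ) < pv j)
      = (Finset.Icc 1 m).filter (fun j => W j ≤ -|W k|) := by
    ext j
    simp only [Finset.mem_filter, Finset.mem_Icc, hpv]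
    constructor
    · rintro ⟨⟨hj1, hjk⟩, hp⟩
      have hjm : j ≤ m := le_trans hjk hkm
      have hWjne : W j ≠ 0 := hne j (Finset.mem_Icc.mpr ⟨hj1, hjm⟩)
      have hWjneg : W j < 0 := by
        by_contra h
        push_neg at h
        have : 0 < W j := lt_of_le_of_ne h (Ne.symm hWjne)
        rw [if_pos this] at hp; linarith
      have : |W k| ≤ |W j| := habs j k hj1 hjk hkm
      rw [abs_of_neg hWjneg] at this
      exact ⟨⟨hj1, hjm⟩, by linarith⟩
    · rintro ⟨⟨hj1, hjm⟩, hw⟩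
      have hWjneg : W j < 0 := by linarith
      have hjk : j ≤ k := hle j hj1 hjm (by rw [abs_of_neg hWjneg]; linarith)
      refine ⟨⟨hj1, hjk⟩, ?_⟩
      rw [if_neg (by linarith)]; norm_num
  have hset2 : (Finset.Icc 1 k).filter (fun j => pv j ≤ (1 / 2 : ℝ))
      = (Finset.Icc 1 m).filter (fun j => |W k| ≤ W j) := by
    ext j
    simp only [Finset.mem_filter, Finset.mem_Icc, hpv]
    constructor
    · rintro ⟨⟨hj1, hjk⟩, hp⟩
      have hjm : j ≤ m := le_trans hjk hkm
      have hWjpos : 0 < W j := by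
        by_contra h
        rw [if_neg h] at hp; linarith
      have : |W k| ≤ |W j| := habs j k hj1 hjk hkm
      rw [abs_of_pos hWjpos] at this
      exact ⟨⟨hj1, hjm⟩, this⟩
    · rintro ⟨⟨hj1, hjm⟩, hw⟩
      have hWjpos : 0 < W j := by linarith
      have hjk : j ≤ k := hle j hj1 hjm (by rw [abs_of_pos hWjpos]; linarith)
      exact ⟨⟨hj1, hjk⟩, by rw [if_pos hWjpos]⟩
  rw [hset1, hset2]
end

section
/- Distribution of the difference statistic: let X, X̃ ∈ ℝ^{n×p} satisfy X̃ᵀX̃ = XᵀX = Σ and XᵀX̃ = Σ − diag{s} for a vector s ∈ ℝ^p, and let y = Xβ + z with β ∈ ℝ^p fixed and z ~ N(0, σ²Iₙ). Then the statistic W = Xᵀy − X̃ᵀy is distributed as N(diag{s}·β, 2σ²·diag{s}); in particular its p coordinates are independent Gaussians with W_j ~ N(s_j·β_j, 2σ²·s_j). -/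
/-!
With `A = Xᵀ - X̃ᵀ`, the knockoff conditions give `A X = diag{s}` and `A Aᵀ = 2 diag{s}`, so
`W = diag{s} β + A z`. For `z ~ N(0, v I)` and any `A` with `A Aᵀ = diag{d}`, the characteristic
function of `c + A z` at `t` is `exp (i ⟪c, t⟫ - v ‖Aᵀ t‖² / 2)`, and `‖Aᵀ t‖² = ∑ⱼ dⱼ tⱼ²`: this
factors into the characteristic functions of the independent Gaussians `N(cⱼ, dⱼ v)`.
-/

open Matrix MeasureTheory ProbabilityTheory
open scoped NNReal RealInnerProductSpace

section GaussianAffineImage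

open Complex WithLp

lemma charFun_map_affine_toLp {ι κ : Type*} [Fintype ι] [Fintype κ] (μ : Measure (κ → ℝ))
    (A : Matrix ι κ ℝ) (c : ι → ℝ) (t : EuclideanSpace ℝ ι) :
    charFun ((μ.map fun x => c + A *ᵥ x).map (toLp 2)) t
      = cexp (⟪toLp 2 c, t⟫ * I) * charFun (μ.map (toLp 2)) (toLp 2 (Aᵀ *ᵥ ofLp t)) := by
  rw [Measure.map_map (by fun_prop) (by fun_prop), charFun_apply, charFun_apply,
    integral_map (by fun_prop) (by fun_prop), integral_map (by fun_prop) (by fun_prop),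
    ← integral_const_mul]
  congr with x
  rw [← Complex.exp_add]
  congr 1
  simp only [Function.comp_apply, EuclideanSpace.inner_eq_star_dotProduct, star_trivial,
    dotProduct_add, dotProduct_mulVec, mulVec_transpose]
  push_cast
  ring

lemma charFun_pi_gaussianReal {κ : Type*} [Fintype κ] (v : ℝ≥0) (t : EuclideanSpace ℝ κ) :
    charFun ((Measure.pi fun _ : κ => gaussianReal 0 v).map (toLp 2)) t
      = cexp (-(v * ‖t‖ ^ 2 / 2)) := by
  rw [charFun_pi]
  simp_rw [charFun_gaussianReal, ← Complex.exp_sum]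
  rw [← ofReal_pow, EuclideanSpace.real_norm_sq_eq]
  push_cast
  simp [Finset.mul_sum, Finset.sum_div]

lemma norm_toLp_transpose_mulVec_sq {ι κ : Type*} [Fintype ι] [Fintype κ] [DecidableEq ι]
    {A : Matrix ι κ ℝ} {d : ι → ℝ} (hA : A * Aᵀ = diagonal d) (t : ι → ℝ) :
    ‖toLp 2 (Aᵀ *ᵥ t)‖ ^ 2 = ∑ i, d i * t i ^ 2 := by
  rw [← real_inner_self_eq_norm_sq, EuclideanSpace.inner_eq_star_dotProduct, star_trivial,
    dotProduct_mulVec, vecMul_transpose, mulVec_mulVec, hA]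
  simp only [dotProduct, mulVec_diagonal]
  congr with i
  ring

lemma nonneg_of_mul_transpose_eq_diagonal {ι κ : Type*} [Fintype κ] [DecidableEq ι]
    {A : Matrix ι κ ℝ} {d : ι → ℝ} (hA : A * Aᵀ = diagonal d) (i : ι) : 0 ≤ d i := by
  have hii := congrFun₂ hA i i
  rw [mul_apply, diagonal_apply_eq] at hii
  rw [← hii]
  exact Finset.sum_nonneg fun k _ => mul_self_nonneg (A i k)

lemma map_affine_pi_gaussianReal {ι κ : Type*} [Fintype ι] [Fintype κ] [DecidableEq ι]
    {A : Matrix ι κ ℝ} {d : ι → ℝ} (hA : A * Aᵀ = diagonal d) (c : ι → ℝ) (v : ℝ≥0) :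
    (Measure.pi fun _ : κ => gaussianReal 0 v).map (fun x => c + A *ᵥ x)
      = Measure.pi fun i => gaussianReal (c i) ((d i).toNNReal * v) := by
  refine charFun_eq_pi_iff.mp fun t => ?_
  rw [charFun_map_affine_toLp, charFun_pi_gaussianReal, ← ofReal_pow,
    norm_toLp_transpose_mulVec_sq hA]
  simp_rw [charFun_gaussianReal, ← Complex.exp_sum, ← Complex.exp_add,
    EuclideanSpace.inner_eq_star_dotProduct, star_trivial, dotProduct, NNReal.coe_mul,
    Real.coe_toNNReal _ (nonneg_of_mul_transpose_eq_diagonal hA _)]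
  push_cast
  congr 1
  simp only [Finset.mul_sum, Finset.sum_mul, Finset.sum_div, ← Finset.sum_neg_distrib,
    ← Finset.sum_add_distrib]
  exact Finset.sum_congr rfl fun i _ => by ring

end GaussianAffineImage

section Knockoff

variable {R m k : Type*} [CommRing R] [Fintype m] [DecidableEq k] {X Xt : Matrix m k R}
  {s : k → R}

lemma knockoff_transpose_mul_swap (h2 : Xᵀ * Xt = Xᵀ * X - diagonal s) :
    Xtᵀ * X = Xᵀ * X - diagonal s := by
  simpa [transpose_mul, transpose_sub] using congrArg transpose h2

lemma knockoff_diff_mul (h2 : Xᵀ * Xt = Xᵀ * X - diagonal s) :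
    (Xᵀ - Xtᵀ) * X = diagonal s := by
  rw [Matrix.sub_mul, knockoff_transpose_mul_swap h2, sub_sub_cancel]

lemma knockoff_diff_mul_transpose (h1 : Xtᵀ * Xt = Xᵀ * X)
    (h2 : Xᵀ * Xt = Xᵀ * X - diagonal s) :
    (Xᵀ - Xtᵀ) * (Xᵀ - Xtᵀ)ᵀ = diagonal (2 • s) := by
  rw [transpose_sub, transpose_transpose, transpose_transpose, Matrix.sub_mul, Matrix.mul_sub,
    Matrix.mul_sub, h1, h2, knockoff_transpose_mul_swap h2, diagonal_smul]
  module

end Knockoff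

theorem knockoff_difference_statistic_gaussian_general {n p : ℕ}
    {Ω : Type*} [MeasurableSpace Ω] (μ : Measure Ω)
    (X Xt : Matrix (Fin n) (Fin p) ℝ) (s : Fin p → ℝ)
    (h1 : Xtᵀ * Xt = Xᵀ * X)
    (h2 : Xᵀ * Xt = Xᵀ * X - Matrix.diagonal s)
    (β : Fin p → ℝ) (σ : ℝ)
    (z : Ω → Fin n → ℝ) (hz : Measurable z)
    (hzlaw : Measure.map z μ = Measure.pi fun _ : Fin n => gaussianReal 0 ⟨σ ^ 2, sq_nonneg σ⟩)
    (y : Ω → Fin n → ℝ) (hy : ∀ ω, y ω = X.mulVec β + z ω)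
    (W : Ω → Fin p → ℝ)
    (hW : ∀ ω, W ω = Xᵀ.mulVec (y ω) - Xtᵀ.mulVec (y ω)) :
    Measure.map W μ
      = Measure.pi fun j : Fin p =>
          gaussianReal (s j * β j) (2 * σ ^ 2 * s j).toNNReal := by
  have hW_affine : W = (fun x => diagonal s *ᵥ β + (Xᵀ - Xtᵀ) *ᵥ x) ∘ z := by
    funext ω
    rw [Function.comp_apply, hW, hy, ← sub_mulVec, mulVec_add, mulVec_mulVec,
      knockoff_diff_mul h2]
  rw [hW_affine, ← Measure.map_map (by fun_prop) hz, hzlaw]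
  refine (map_affine_pi_gaussianReal (knockoff_diff_mul_transpose h1 h2) _ _).trans ?_
  congr 1
  funext j
  rw [mulVec_diagonal]
  congr 1
  rw [show 2 * σ ^ 2 * s j = σ ^ 2 * (2 • s) j by simp only [Pi.smul_apply]; ring,
    Real.toNNReal_mul (sq_nonneg σ), Real.toNNReal_of_nonneg (sq_nonneg σ)]
  exact mul_comm _ _

/-- **Distribution of the difference statistic**: let `X, X̃ ∈ ℝ^{n×p}` satisfy
`X̃ᵀX̃ = XᵀX = Σ` and `XᵀX̃ = Σ − diag{s}`, and let `y = Xβ + z` with `β` fixed and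
`z ~ N(0, σ²Iₙ)`.  Then `W = Xᵀy − X̃ᵀy` is distributed as `N(diag{s}β, 2σ² diag{s})`;
in particular its `p` coordinates are independent Gaussians with
`W_j ~ N(s_j β_j, 2σ² s_j)`.  (The law `N(diag{s}β, 2σ² diag{s})` is expressed as the
product of these Gaussian marginals.) -/
theorem knockoff_difference_statistic_gaussian {n p : ℕ}
    {Ω : Type*} [MeasurableSpace Ω] (μ : Measure Ω) [IsProbabilityMeasure μ]
    (X Xt : Matrix (Fin n) (Fin p) ℝ) (s : Fin p → ℝ)
    (h1 : Xtᵀ * Xt = Xᵀ * X)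
    (h2 : Xᵀ * Xt = Xᵀ * X - Matrix.diagonal s)
    (β : Fin p → ℝ) (σ : ℝ) (hσ : 0 < σ)
    (z : Ω → Fin n → ℝ) (hz : Measurable z)
    (hzlaw : Measure.map z μ = Measure.pi fun _ : Fin n => gaussianReal 0 ⟨σ ^ 2, sq_nonneg σ⟩)
    (y : Ω → Fin n → ℝ) (hy : ∀ ω, y ω = X.mulVec β + z ω)
    (W : Ω → Fin p → ℝ)
    (hW : ∀ ω, W ω = Xᵀ.mulVec (y ω) - Xtᵀ.mulVec (y ω)) :
    Measure.map W μ
      = Measure.pi fun j : Fin p =>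
          gaussianReal (s j * β j) (2 * σ ^ 2 * s j).toNNReal :=
  knockoff_difference_statistic_gaussian_general μ X Xt s h1 h2 β σ z hz hzlaw y hy W hW
end
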